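/- arXiv:2111.05816 — 7 statements merged into one kernel-verified Lean document; each statement's English description precedes it below -/
import Mathlib

section
/- For any finite graph G, the vertex conductance is at most four times the matching conductance: Ψ*(G) ≤ 4·Υ*(G). -/
/-!
Let `M` be a maximum matching of cut edges of `S`, with `ν = |M|`, and let `A ⊆ S`, `B ⊆ Sᶜ` be its
two sides. By maximality every cut edge meets `A ∪ B`, so removing `A` from `S` leaves a set
`S' = S \ A` whose vertex boundary lies in `A ∪ B`; hence `|∂S'| ≤ 2ν` while `|S'| ≥ |S| - ν`.
If `2ν ≤ |S|` this gives `Ψ(S') ≤ 2ν / (|S| / 2) = 4ν / |S|`. Otherwise `4ν / |S| > 2`, and any set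
of `⌊n/2⌋` vertices already has `Ψ ≤ 2`.
-/

open Finset
open scoped Classical

/-- Maximum size of a matching among edges of `G` crossing from `S` to its complement. -/
noncomputable def cutMatchNum {V : Type*} [Fintype V] (G : SimpleGraph V) (S : Finset V) : ℕ :=
  sSup {n : ℕ | ∃ M : Finset (V × V),
    (∀ p ∈ M, p.1 ∈ S ∧ p.2 ∉ S ∧ G.Adj p.1 p.2) ∧
    (∀ p ∈ M, ∀ q ∈ M, p ≠ q → p.1 ≠ q.1 ∧ p.1 ≠ q.2 ∧ p.2 ≠ q.1 ∧ p.2 ≠ q.2) ∧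
    M.card = n}

/-- The vertex boundary of `S`: vertices outside `S` adjacent to a vertex of `S`. -/
noncomputable def vtxBoundary {V : Type*} [Fintype V] (G : SimpleGraph V) (S : Finset V) :
    Finset V :=
  univ.filter (fun y => y ∉ S ∧ ∃ x ∈ S, G.Adj x y)

/-- Matching conductance Υ*(G). -/
noncomputable def matchCond {V : Type*} [Fintype V] (G : SimpleGraph V) : ℝ :=
  sInf {r : ℝ | ∃ S : Finset V, S.Nonempty ∧ 2 * S.card ≤ Fintype.card V ∧
    r = (cutMatchNum G S : ℝ) / S.card}

/-- Vertex conductance Ψ*(G). -/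
noncomputable def vertexCond {V : Type*} [Fintype V] (G : SimpleGraph V) : ℝ :=
  sInf {r : ℝ | ∃ S : Finset V, S.Nonempty ∧ 2 * S.card ≤ Fintype.card V ∧
    r = ((vtxBoundary G S).card : ℝ) / S.card}

namespace SimpleGraph

variable {V : Type*}

def IsCutMatching (G : SimpleGraph V) (S : Finset V) (M : Finset (V × V)) : Prop :=
  (∀ p ∈ M, p.1 ∈ S ∧ p.2 ∉ S ∧ G.Adj p.1 p.2) ∧
    ∀ p ∈ M, ∀ q ∈ M, p ≠ q → p.1 ≠ q.1 ∧ p.1 ≠ q.2 ∧ p.2 ≠ q.1 ∧ p.2 ≠ q.2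

theorem IsCutMatching.insert {G : SimpleGraph V} {S : Finset V} {M : Finset (V × V)} {x y : V}
    (hM : G.IsCutMatching S M) (hx : x ∈ S) (hy : y ∉ S) (hxy : G.Adj x y)
    (hfree : ∀ q ∈ M, x ≠ q.1 ∧ x ≠ q.2 ∧ y ≠ q.1 ∧ y ≠ q.2) :
    G.IsCutMatching S (insert (x, y) M) := by
  refine ⟨fun p hp => ?_, fun p hp q hq hpq => ?_⟩
  · rcases mem_insert.1 hp with rfl | hp
    exacts [⟨hx, hy, hxy⟩, hM.1 p hp]
  · rcases mem_insert.1 hp with rfl | hp <;> rcases mem_insert.1 hq with rfl | hq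
    · exact absurd rfl hpq
    · exact hfree q hq
    · obtain ⟨h₁, h₂, h₃, h₄⟩ := hfree p hp
      exact ⟨h₁.symm, h₃.symm, h₂.symm, h₄.symm⟩
    · exact hM.2 p hp q hq hpq

variable [Fintype V] (G : SimpleGraph V)

theorem bddAbove_card_isCutMatching (S : Finset V) :
    BddAbove {n : ℕ | ∃ M : Finset (V × V),
      (∀ p ∈ M, p.1 ∈ S ∧ p.2 ∉ S ∧ G.Adj p.1 p.2) ∧
      (∀ p ∈ M, ∀ q ∈ M, p ≠ q → p.1 ≠ q.1 ∧ p.1 ≠ q.2 ∧ p.2 ≠ q.1 ∧ p.2 ≠ q.2) ∧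
      M.card = n} :=
  ⟨Fintype.card (V × V), by rintro n ⟨M, -, -, rfl⟩; exact M.card_le_univ⟩

theorem exists_isCutMatching_card_eq_cutMatchNum (S : Finset V) :
    ∃ M, G.IsCutMatching S M ∧ M.card = cutMatchNum G S := by
  obtain ⟨M, h₁, h₂, hcard⟩ :=
    Nat.sSup_mem (by exact ⟨0, ∅, by simp, by simp, rfl⟩) (bddAbove_card_isCutMatching G S)
  exact ⟨M, ⟨h₁, h₂⟩, hcard⟩

theorem vtxBoundary_subset_compl (S : Finset V) : vtxBoundary G S ⊆ Sᶜ := fun _ hy =>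
  mem_compl.2 (mem_filter.1 hy).2.1

theorem vertexCond_le {S : Finset V} (hS : S.Nonempty) (hcard : 2 * S.card ≤ Fintype.card V) :
    vertexCond G ≤ (vtxBoundary G S).card / S.card :=
  csInf_le ⟨0, by rintro r ⟨S, -, -, rfl⟩; positivity⟩ ⟨S, hS, hcard, rfl⟩

theorem vertexCond_le_two (hV : 2 ≤ Fintype.card V) : vertexCond G ≤ 2 := by
  obtain ⟨T, -, hT⟩ := exists_subset_card_eq (s := (univ : Finset V))
    (n := Fintype.card V / 2) (by rw [card_univ]; exact Nat.div_le_self _ _)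
  have hTpos : 0 < T.card := by omega
  have hbdy : (vtxBoundary G T).card ≤ 2 * T.card := by
    have := card_le_card (vtxBoundary_subset_compl G T)
    rw [card_compl] at this
    omega
  calc vertexCond G ≤ (vtxBoundary G T).card / T.card :=
        vertexCond_le G (card_pos.1 hTpos) (by omega)
    _ ≤ 2 := by
      rw [div_le_iff₀ (by exact_mod_cast hTpos)]
      exact_mod_cast hbdy

variable {G}

theorem IsCutMatching.card_le_cutMatchNum {S : Finset V} {M : Finset (V × V)}
    (hM : G.IsCutMatching S M) : M.card ≤ cutMatchNum G S :=
  le_csSup (bddAbove_card_isCutMatching G S) ⟨M, hM.1, hM.2, rfl⟩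

theorem IsCutMatching.mem_or_mem_of_card_eq {S : Finset V} {M : Finset (V × V)}
    (hM : G.IsCutMatching S M) (hcard : M.card = cutMatchNum G S) {x y : V}
    (hx : x ∈ S) (hy : y ∉ S) (hxy : G.Adj x y) :
    x ∈ M.image Prod.fst ∨ y ∈ M.image Prod.snd := by
  by_contra! h
  obtain ⟨hxA, hyB⟩ := h
  have hfree : ∀ q ∈ M, x ≠ q.1 ∧ x ≠ q.2 ∧ y ≠ q.1 ∧ y ≠ q.2 := fun q hq =>
    ⟨fun h => hxA (h ▸ mem_image_of_mem _ hq), fun h => (hM.1 q hq).2.1 (h ▸ hx),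
      fun h => hy (h ▸ (hM.1 q hq).1), fun h => hyB (h ▸ mem_image_of_mem _ hq)⟩
  have hnew : (x, y) ∉ M := fun h => hxA (mem_image_of_mem _ h)
  have := (hM.insert hx hy hxy hfree).card_le_cutMatchNum
  rw [card_insert_of_notMem hnew] at this
  omega

theorem vtxBoundary_sdiff_subset_union {S A B : Finset V}
    (hcover : ∀ x ∈ S, ∀ y ∉ S, G.Adj x y → x ∈ A ∨ y ∈ B) :
    vtxBoundary G (S \ A) ⊆ A ∪ B := by
  intro y hy
  obtain ⟨-, hy, x, hx, hxy⟩ := mem_filter.1 hy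
  obtain ⟨hxS, hxA⟩ := mem_sdiff.1 hx
  by_cases hyS : y ∈ S
  · exact mem_union_left _ (by_contra fun hyA => hy (mem_sdiff.2 ⟨hyS, hyA⟩))
  · exact (hcover x hxS y hyS hxy).elim (absurd · hxA) (mem_union_right _)

variable (G)

theorem exists_subset_card_vtxBoundary_le (S : Finset V) :
    ∃ S' ⊆ S, S.card ≤ S'.card + cutMatchNum G S ∧
      (vtxBoundary G S').card ≤ 2 * cutMatchNum G S := by
  obtain ⟨M, hM, hcard⟩ := exists_isCutMatching_card_eq_cutMatchNum G S
  set A := M.image Prod.fst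
  set B := M.image Prod.snd
  have hAS : A ⊆ S := fun a ha => by
    obtain ⟨p, hp, rfl⟩ := mem_image.1 ha
    exact (hM.1 p hp).1
  have hA : A.card ≤ cutMatchNum G S := hcard ▸ card_image_le
  have hB : B.card ≤ cutMatchNum G S := hcard ▸ card_image_le
  have hbdy : (vtxBoundary G (S \ A)).card ≤ (A ∪ B).card :=
    card_le_card <| vtxBoundary_sdiff_subset_union fun x hx y hy hxy =>
      hM.mem_or_mem_of_card_eq hcard hx hy hxy
  refine ⟨S \ A, sdiff_subset, ?_, ?_⟩
  · rw [card_sdiff_of_subset hAS]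
    omega
  · have := card_union_le A B
    omega

theorem vertexCond_le_four_mul_cutMatchNum_div {S : Finset V} (hS : S.Nonempty)
    (hcard : 2 * S.card ≤ Fintype.card V) :
    vertexCond G ≤ 4 * (cutMatchNum G S / S.card) := by
  have hSpos : (0 : ℝ) < S.card := by exact_mod_cast card_pos.2 hS
  set ν := cutMatchNum G S
  rcases lt_or_ge S.card (2 * ν) with hbig | hsmall
  · have hbig : (S.card : ℝ) < 2 * ν := by exact_mod_cast hbig
    calc vertexCond G ≤ 2 := vertexCond_le_two G (by have := card_pos.2 hS; omega)
      _ ≤ 4 * (ν / S.card) := by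
        rw [mul_div_assoc', le_div_iff₀ hSpos]
        linarith
  · obtain ⟨S', hS'S, hS', hbdy⟩ := exists_subset_card_vtxBoundary_le G S
    have hhalf : (S.card : ℝ) / 2 ≤ S'.card := by
      rw [div_le_iff₀ two_pos]
      exact_mod_cast (by omega : S.card ≤ S'.card * 2)
    have hS'pos : 0 < S'.card := by have := card_pos.2 hS; omega
    calc vertexCond G ≤ (vtxBoundary G S').card / S'.card :=
          vertexCond_le G (card_pos.1 hS'pos)
            ((Nat.mul_le_mul_left 2 (card_le_card hS'S)).trans hcard)
      _ ≤ 2 * ν / (S.card / 2) := by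
        gcongr
        exact_mod_cast hbdy
      _ = 4 * (ν / S.card) := by ring

end SimpleGraph

theorem vertexCond_le_four_mul_matchCond {V : Type*} [Fintype V] (G : SimpleGraph V) :
    vertexCond G ≤ 4 * matchCond G := by
  by_cases hadm : ∃ S : Finset V, S.Nonempty ∧ 2 * S.card ≤ Fintype.card V
  · obtain ⟨S₀, hS₀, hS₀card⟩ := hadm
    suffices vertexCond G / 4 ≤ matchCond G by linarith
    refine le_csInf ⟨_, S₀, hS₀, hS₀card, rfl⟩ ?_
    rintro r ⟨S, hS, hcard, rfl⟩
    linarith [G.vertexCond_le_four_mul_cutMatchNum_div hS hcard]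
  · -- no admissible set: both infima are `sInf ∅ = 0`
    have hempty (f : Finset V → ℝ) :
        {r : ℝ | ∃ S : Finset V, S.Nonempty ∧ 2 * S.card ≤ Fintype.card V ∧ r = f S} = ∅ :=
      Set.eq_empty_of_forall_notMem fun _ ⟨S, hS, hcard, _⟩ => hadm ⟨S, hS, hcard⟩
    rw [vertexCond, matchCond, hempty, hempty, Real.sInf_empty, mul_zero]
end

section
/- Let G be a finite weighted undirected graph with nonnegative edge weights, and let G⃗ be any orientation of G (each undirected edge replaced by a directed edge with the same weight). Then the maximum weight of a directed matching in G⃗ is at most 4 times the maximum weight of an (undirected) matching in G. -/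
/-!
Greedy extraction: take a heaviest edge `p` of a directed matching `M`. Besides `p` itself, an
edge of `M` can share a vertex with `p` only by leaving the head of `p` or entering its tail, and
there is at most one edge of each kind. Keeping `p`, discarding these at most three edges of weight
at most `w p`, and recursing yields an undirected matching `N ⊆ M` with `∑ M ≤ 3 ∑ N`.
-/

open Finset

namespace DirectedMatching

variable {V : Type*}

def IsDirectedMatching (M : Finset (V × V)) : Prop :=
  ∀ p ∈ M, ∀ q ∈ M, p ≠ q → p.1 ≠ q.1 ∧ p.2 ≠ q.2

def VertexDisjoint (p q : V × V) : Prop :=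
  p.1 ≠ q.1 ∧ p.1 ≠ q.2 ∧ p.2 ≠ q.1 ∧ p.2 ≠ q.2

instance [DecidableEq V] (p q : V × V) : Decidable (VertexDisjoint p q) :=
  inferInstanceAs (Decidable (_ ∧ _))

def IsUndirectedMatching (M : Finset (V × V)) : Prop :=
  ∀ p ∈ M, ∀ q ∈ M, p ≠ q → VertexDisjoint p q

lemma VertexDisjoint.symm {p q : V × V} (h : VertexDisjoint p q) : VertexDisjoint q p :=
  ⟨h.1.symm, h.2.2.1.symm, h.2.1.symm, h.2.2.2.symm⟩

lemma IsDirectedMatching.mono {M M' : Finset (V × V)} (hM : IsDirectedMatching M)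
    (h : M' ⊆ M) : IsDirectedMatching M' :=
  fun p hp q hq => hM p (h hp) q (h hq)

lemma IsUndirectedMatching.insert [DecidableEq V] {N : Finset (V × V)} {p : V × V}
    (hN : IsUndirectedMatching N) (hp : ∀ q ∈ N, VertexDisjoint p q) :
    IsUndirectedMatching (insert p N) := by
  intro a ha b hb hab
  rcases mem_insert.1 ha with rfl | haN <;> rcases mem_insert.1 hb with rfl | hbN
  · exact absurd rfl hab
  · exact hp b hbN
  · exact (hp a haN).symm
  · exact hN a haN b hbN hab

lemma IsDirectedMatching.card_filter_fst_eq_le_one [DecidableEq V] {M : Finset (V × V)}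
    (hM : IsDirectedMatching M) (v : V) : (M.filter (·.1 = v)).card ≤ 1 :=
  card_le_one.2 fun a ha b hb => by
    by_contra hab
    exact (hM a (mem_filter.1 ha).1 b (mem_filter.1 hb).1 hab).1
      ((mem_filter.1 ha).2.trans (mem_filter.1 hb).2.symm)

lemma IsDirectedMatching.card_filter_snd_eq_le_one [DecidableEq V] {M : Finset (V × V)}
    (hM : IsDirectedMatching M) (v : V) : (M.filter (·.2 = v)).card ≤ 1 :=
  card_le_one.2 fun a ha b hb => by
    by_contra hab
    exact (hM a (mem_filter.1 ha).1 b (mem_filter.1 hb).1 hab).2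
      ((mem_filter.1 ha).2.trans (mem_filter.1 hb).2.symm)

lemma IsDirectedMatching.card_filter_not_vertexDisjoint_le_three [DecidableEq V]
    {M : Finset (V × V)} (hM : IsDirectedMatching M) {p : V × V} (hp : p ∈ M) :
    (M.filter (¬ VertexDisjoint p ·)).card ≤ 3 := by
  have hsub : M.filter (¬ VertexDisjoint p ·) ⊆
      insert p (M.filter (·.1 = p.2) ∪ M.filter (·.2 = p.1)) := by
    intro q hq
    obtain ⟨hqM, hpq⟩ := mem_filter.1 hq
    by_cases hqp : q = p
    · exact hqp ▸ mem_insert_self _ _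
    obtain ⟨h1, h2⟩ := hM p hp q hqM (Ne.symm hqp)
    have : q.1 = p.2 ∨ q.2 = p.1 := by
      unfold VertexDisjoint at hpq
      grind
    refine mem_insert_of_mem ?_
    rcases this with h | h
    · exact mem_union_left _ (mem_filter.2 ⟨hqM, h⟩)
    · exact mem_union_right _ (mem_filter.2 ⟨hqM, h⟩)
  calc (M.filter (¬ VertexDisjoint p ·)).card
      ≤ (M.filter (·.1 = p.2) ∪ M.filter (·.2 = p.1)).card + 1 :=
        (card_le_card hsub).trans (card_insert_le _ _)
    _ ≤ (M.filter (·.1 = p.2)).card + (M.filter (·.2 = p.1)).card + 1 :=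
        Nat.add_le_add_right (card_union_le _ _) 1
    _ ≤ 3 := by
        have := hM.card_filter_fst_eq_le_one p.2
        have := hM.card_filter_snd_eq_le_one p.1
        omega

theorem IsDirectedMatching.exists_isUndirectedMatching_three_mul_sum_ge [DecidableEq V]
    (w : V × V → ℝ) (M : Finset (V × V)) (hw : ∀ p ∈ M, 0 ≤ w p)
    (hM : IsDirectedMatching M) :
    ∃ N ⊆ M, IsUndirectedMatching N ∧ ∑ p ∈ M, w p ≤ 3 * ∑ p ∈ N, w p := by
  induction M using Finset.strongInduction with
  | _ M ih =>
  rcases M.eq_empty_or_nonempty with rfl | hne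
  · exact ⟨∅, Subset.rfl, by simp [IsUndirectedMatching], by simp⟩
  obtain ⟨p, hpM, hpmax⟩ := M.exists_max_image w hne
  have hfilter : M.filter (VertexDisjoint p ·) ⊂ M :=
    filter_ssubset.2 ⟨p, hpM, fun h => h.1 rfl⟩
  obtain ⟨N, hNsub, hN, hsumN⟩ :=
    ih _ hfilter (fun q hq => hw q (hfilter.subset hq)) (hM.mono hfilter.subset)
  have hpN : p ∉ N := fun h => (mem_filter.1 (hNsub h)).2.1 rfl
  have hrest : ∑ q ∈ M.filter (¬ VertexDisjoint p ·), w q ≤ 3 * w p :=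
    calc ∑ q ∈ M.filter (¬ VertexDisjoint p ·), w q
        ≤ (M.filter (¬ VertexDisjoint p ·)).card • w p :=
          sum_le_card_nsmul _ _ _ fun q hq => hpmax q (mem_filter.1 hq).1
      _ ≤ 3 * w p := by
          rw [nsmul_eq_mul]
          exact mul_le_mul_of_nonneg_right
            (by exact_mod_cast hM.card_filter_not_vertexDisjoint_le_three hpM) (hw p hpM)
  refine ⟨insert p N, insert_subset hpM (hNsub.trans hfilter.subset),
    hN.insert fun q hq => (mem_filter.1 (hNsub hq)).2, ?_⟩
  calc ∑ q ∈ M, w q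
      = ∑ q ∈ M.filter (VertexDisjoint p ·), w q +
          ∑ q ∈ M.filter (¬ VertexDisjoint p ·), w q :=
        (sum_filter_add_sum_filter_not M _ w).symm
    _ ≤ 3 * ∑ q ∈ N, w q + 3 * w p := add_le_add hsumN hrest
    _ = 3 * ∑ q ∈ insert p N, w q := by rw [sum_insert hpN]; ring

end DirectedMatching

open DirectedMatching in
theorem directed_matching_le_four_mul_undirected_general {V : Type*}
    (E : Finset (V × V)) (w : V × V → ℝ)
    (hw : ∀ p ∈ E, 0 ≤ w p) :
    sSup {x : ℝ | ∃ M ⊆ E,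
        (∀ p ∈ M, ∀ q ∈ M, p ≠ q → p.1 ≠ q.1 ∧ p.2 ≠ q.2) ∧
        x = ∑ p ∈ M, w p}
      ≤ 4 * sSup {x : ℝ | ∃ M ⊆ E,
        (∀ p ∈ M, ∀ q ∈ M, p ≠ q → p.1 ≠ q.1 ∧ p.1 ≠ q.2 ∧ p.2 ≠ q.1 ∧ p.2 ≠ q.2) ∧
        x = ∑ p ∈ M, w p} := by
  classical
  set ν : Set ℝ := {x : ℝ | ∃ M ⊆ E, IsUndirectedMatching M ∧ x = ∑ p ∈ M, w p}
  have hν_bdd : BddAbove ν := by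
    refine ⟨∑ p ∈ E, w p, ?_⟩
    rintro _ ⟨M, hME, -, rfl⟩
    exact sum_le_sum_of_subset_of_nonneg hME fun p hp _ => hw p hp
  have hν_nonneg : 0 ≤ sSup ν :=
    le_csSup hν_bdd ⟨∅, empty_subset _, by simp [IsUndirectedMatching], by simp⟩
  change _ ≤ 4 * sSup ν
  refine Real.sSup_le ?_ (by positivity)
  rintro _ ⟨M, hME, hM, rfl⟩
  obtain ⟨N, hNM, hN, hsum⟩ :=
    IsDirectedMatching.exists_isUndirectedMatching_three_mul_sum_ge w M
      (fun p hp => hw p (hME hp)) hM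
  have hNν : ∑ p ∈ N, w p ≤ sSup ν := le_csSup hν_bdd ⟨N, hNM.trans hME, hN, rfl⟩
  linarith

/-- The maximum weight of a directed matching in an orientation of a weighted graph is at most
four times the maximum weight of an undirected matching.  Here `E` is the edge set of the
orientation (each undirected edge appears with exactly one of its two orientations), with
nonnegative weights `w`. -/
theorem directed_matching_le_four_mul_undirected {V : Type*} [Fintype V] [DecidableEq V]
    (E : Finset (V × V)) (w : V × V → ℝ)
    (hw : ∀ p ∈ E, 0 ≤ w p)
    (hirr : ∀ p ∈ E, p.1 ≠ p.2)
    (horient : ∀ p ∈ E, (p.2, p.1) ∉ E) :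
    sSup {x : ℝ | ∃ M ⊆ E,
        (∀ p ∈ M, ∀ q ∈ M, p ≠ q → p.1 ≠ q.1 ∧ p.2 ≠ q.2) ∧
        x = ∑ p ∈ M, w p}
      ≤ 4 * sSup {x : ℝ | ∃ M ⊆ E,
        (∀ p ∈ M, ∀ q ∈ M, p ≠ q → p.1 ≠ q.1 ∧ p.1 ≠ q.2 ∧ p.2 ≠ q.1 ∧ p.2 ≠ q.2) ∧
        x = ∑ p ∈ M, w p} :=
  directed_matching_le_four_mul_undirected_general E w hw
end

section
/- Let T = (V,F) be a finite tree with positive edge weights u, let π_u be the induced stationary distribution of the random walk on (T,u). Then the spectral gap of the random walk satisfies Γ_u ≥ Φ̃*_u / diam(T), where Φ̃*_u is the minimum adjusted conductance over nontrivial vertex subsets. -/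
open Finset

/-- Dirichlet form of the random walk with symmetric edge weights `u`
(up to the common normalisation `1/u(V)`): `(1/2)·Σ_{x,y} u x y (f x − f y)²`. -/
noncomputable def dirichletForm {V : Type*} [Fintype V] (u : V → V → ℝ) (f : V → ℝ) : ℝ :=
  (∑ x, ∑ y, u x y * (f x - f y) ^ 2) / 2

/-- Variance of `f` under the stationary distribution `π_u(x) = u(x)/u(V)`
(up to the common normalisation `1/u(V)`): `Σ_x u(x)·(f x − π_u f)²`. -/
noncomputable def varForm {V : Type*} [Fintype V] (u : V → V → ℝ) (f : V → ℝ) : ℝ :=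
  ∑ x, (∑ y, u x y) * (f x - (∑ z, (∑ y, u z y) * f z) / (∑ a, ∑ b, u a b)) ^ 2

/-- The spectral gap of the reversible random walk with weights `u`, via the variational
(Rayleigh quotient) characterisation: `Γ_u = inf_{f nonconstant} E(f,f)/Var_π(f)`. -/
noncomputable def specGap {V : Type*} [Fintype V] (u : V → V → ℝ) : ℝ :=
  sInf {r : ℝ | ∃ f : V → ℝ, (∃ x y, f x ≠ f y) ∧ r = dirichletForm u f / varForm u f}

/-- Minimum adjusted conductance `Φ̃*_u`:  `Φ̃_u(S) = π_u(E(S,Sᶜ))/(π_u(S)π_u(Sᶜ))`,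
minimised over `S` with `0 < π_u(S) < 1`. -/
noncomputable def minAdjCond {V : Type*} [Fintype V] [DecidableEq V] (u : V → V → ℝ) : ℝ :=
  sInf {r : ℝ | ∃ S : Finset V,
    0 < (∑ x ∈ S, ∑ y, u x y) / (∑ a, ∑ b, u a b) ∧
    (∑ x ∈ S, ∑ y, u x y) / (∑ a, ∑ b, u a b) < 1 ∧
    r = ((∑ x ∈ S, ∑ y ∈ Sᶜ, u x y) / (∑ a, ∑ b, u a b)) /
      (((∑ x ∈ S, ∑ y, u x y) / (∑ a, ∑ b, u a b)) *
        ((∑ x ∈ Sᶜ, ∑ y, u x y) / (∑ a, ∑ b, u a b)))}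

/-!
Canonical paths. For a dart `d` of the tree let `S_d` be the set of vertices on the `d.fst` side
of its edge. Telescoping `f x - f y` along the path from `x` to `y` and applying Cauchy–Schwarz
gives `(f x - f y)² ≤ diam T · Σ_d (f d.fst - f d.snd)²` over the darts of that path, each of
which has `x ∈ S_d`, `y ∉ S_d`. Summing against `u(x) u(y)` bounds the variance by
`diam T · Σ_d (f d.fst - f d.snd)² u(S_d) u(S_dᶜ)`. Since `d` is the only edge leaving `S_d`,
the definition of `Φ̃*_u` bounds `Φ̃*_u u(S_d) u(S_dᶜ)` by `u(V) u(d.fst, d.snd)`, which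
reassembles the Dirichlet form.
-/

section WeightedVariance

variable {ι : Type*} [Fintype ι] (w f : ι → ℝ)

theorem sum_sum_mul_mul_sq_sub (hw : ∑ x, w x ≠ 0) :
    ∑ x, ∑ y, w x * w y * (f x - f y) ^ 2 =
      2 * (∑ x, w x) * ∑ x, w x * (f x - (∑ z, w z * f z) / ∑ x, w x) ^ 2 := by
  set m := (∑ z, w z * f z) / ∑ x, w x
  have hcentered : ∑ x, w x * (f x - m) = 0 := by
    simp only [mul_sub, sum_sub_distrib, ← sum_mul, m]
    field_simp
    ring
  calc ∑ x, ∑ y, w x * w y * (f x - f y) ^ 2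
      = ∑ x, ∑ y, (w x * (f x - m) ^ 2 * w y + w x * (w y * (f y - m) ^ 2)
          - 2 * (w x * (f x - m)) * (w y * (f y - m))) := by
        congr! 2 with x _ y _
        ring
    _ = 2 * (∑ x, w x) * ∑ x, w x * (f x - m) ^ 2 := by
        simp only [sum_sub_distrib, sum_add_distrib, ← mul_sum, ← sum_mul, hcentered]
        ring

theorem sum_mul_sq_sub_pos (hw : ∀ x, 0 < w x) {x y : ι} (hxy : f x ≠ f y) (c : ℝ) :
    0 < ∑ z, w z * (f z - c) ^ 2 := by
  have hterm : ∀ z, 0 ≤ w z * (f z - c) ^ 2 := fun z => by have := hw z; positivity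
  refine (sum_nonneg fun z _ => hterm z).lt_of_ne fun h => hxy ?_
  have hc : ∀ z, f z = c := fun z => by
    simpa [(hw z).ne', sub_eq_zero] using (sum_eq_zero_iff_of_nonneg fun z _ => hterm z).1 h.symm z
  rw [hc x, hc y]

end WeightedVariance

namespace SimpleGraph

variable {V : Type*} {G : SimpleGraph V}

theorem Walk.sum_darts_sub (f : V → ℝ) {x y : V} (p : G.Walk x y) :
    (p.darts.map fun d => f d.fst - f d.snd).sum = f x - f y := by
  induction p with
  | nil => simp
  | cons _ _ ih => simp [ih]

theorem Walk.IsPath.reachable_deleteEdges_of_mem_darts {x y : V} {p : G.Walk x y}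
    (hp : p.IsPath) {d : G.Dart} (hd : d ∈ p.darts) :
    (G.deleteEdges {d.edge}).Reachable x d.fst ∧ (G.deleteEdges {d.edge}).Reachable d.snd y := by
  induction p with
  | nil => simp at hd
  | @cons x z y hxz q ih =>
    rw [Walk.cons_isPath_iff] at hp
    obtain ⟨hq, hx⟩ := hp
    have hx_edge : ∀ e ∈ q.edges, e ≠ s(x, z) := fun e he hex =>
      hx (q.fst_mem_support_of_mem_edges (hex ▸ he))
    rcases List.mem_cons.1 hd with rfl | hd
    · exact ⟨.rfl, ⟨q.toDeleteEdges _ fun e he => by simpa using hx_edge e he⟩⟩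
    · have hadj : (G.deleteEdges {d.edge}).Adj x z :=
        (deleteEdges_adj ..).2 ⟨hxz, fun h => hx_edge _ (q.edges_eq_map_darts ▸
          List.mem_map_of_mem hd) (Set.mem_singleton_iff.1 h).symm⟩
      exact (ih hq hd).imp_left hadj.reachable.trans

variable [Fintype V]

open Classical in
noncomputable def dartSide (G : SimpleGraph V) (d : G.Dart) : Finset V :=
  {v | (G.deleteEdges {d.edge}).Reachable v d.fst}

theorem mem_dartSide {d : G.Dart} {v : V} :
    v ∈ G.dartSide d ↔ (G.deleteEdges {d.edge}).Reachable v d.fst := by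
  simp [dartSide]

theorem fst_mem_dartSide (d : G.Dart) : d.fst ∈ G.dartSide d :=
  mem_dartSide.2 .rfl

theorem IsAcyclic.snd_notMem_dartSide (hG : G.IsAcyclic) (d : G.Dart) : d.snd ∉ G.dartSide d :=
  fun h => isAcyclic_iff_forall_adj_isBridge.1 hG d.adj (mem_dartSide.1 h).symm

theorem IsAcyclic.eq_of_adj_of_mem_dartSide (hG : G.IsAcyclic) {d : G.Dart} {x y : V}
    (hxy : G.Adj x y) (hx : x ∈ G.dartSide d) (hy : y ∉ G.dartSide d) :
    x = d.fst ∧ y = d.snd := by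
  have hedge : s(x, y) = d.edge := by
    by_contra hne
    have hadj : (G.deleteEdges {d.edge}).Adj y x :=
      (deleteEdges_adj ..).2 ⟨hxy.symm, by simpa [Sym2.eq_swap] using hne⟩
    exact hy (mem_dartSide.2 (hadj.reachable.trans (mem_dartSide.1 hx)))
  rcases Sym2.eq_iff.1 hedge with h | ⟨rfl, -⟩
  · exact h
  · exact absurd hx (hG.snd_notMem_dartSide d)

theorem IsAcyclic.mem_dartSide_of_mem_darts (hG : G.IsAcyclic) {x y : V} {p : G.Walk x y}
    (hp : p.IsPath) {d : G.Dart} (hd : d ∈ p.darts) :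
    x ∈ G.dartSide d ∧ y ∉ G.dartSide d := by
  obtain ⟨hx, hy⟩ := hp.reachable_deleteEdges_of_mem_darts hd
  exact ⟨mem_dartSide.2 hx,
    fun h => hG.snd_notMem_dartSide d (mem_dartSide.2 (hy.trans (mem_dartSide.1 h)))⟩

theorem sum_darts_eq_sum_sum [DecidableRel G.Adj] {M : Type*} [AddCommMonoid M] {g : V → V → M}
    (hg : ∀ x y, g x y ≠ 0 → G.Adj x y) :
    ∑ d : G.Dart, g d.fst d.snd = ∑ x, ∑ y, g x y := by
  calc ∑ d : G.Dart, g d.fst d.snd = ∑ p ∈ univ.map ⟨_, Dart.toProd_injective⟩, g p.1 p.2 := by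
        rw [sum_map]
        rfl
    _ = ∑ p : V × V, g p.1 p.2 := by
        refine sum_subset (subset_univ _) ?_
        rintro ⟨x, y⟩ - hxy
        by_contra h
        exact hxy (mem_map.2 ⟨⟨(x, y), hg x y h⟩, mem_univ _, rfl⟩)
    _ = ∑ x, ∑ y, g x y := Fintype.sum_prod_type _

variable [DecidableEq V]

theorem IsAcyclic.sum_dartSide_compl {u : V → V → ℝ} (hG : G.IsAcyclic)
    (hsupp : ∀ x y, u x y ≠ 0 → G.Adj x y)
    (d : G.Dart) : ∑ x ∈ G.dartSide d, ∑ y ∈ (G.dartSide d)ᶜ, u x y = u d.fst d.snd := by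
  rw [← sum_product']
  refine sum_eq_single_of_mem (d.fst, d.snd)
    (mem_product.2 ⟨fst_mem_dartSide d, mem_compl.2 (hG.snd_notMem_dartSide d)⟩) ?_
  rintro ⟨x, y⟩ hxy hne
  by_contra h
  rw [mem_product, mem_compl] at hxy
  exact hne (Prod.ext_iff.2 (hG.eq_of_adj_of_mem_dartSide (hsupp x y h) hxy.1 hxy.2))

variable [DecidableRel G.Adj]

theorem IsTree.sq_sub_le_diam_mul_sum (hG : G.IsTree) (f : V → ℝ) (x y : V) :
    (f x - f y) ^ 2 ≤
      G.diam * ∑ d with x ∈ G.dartSide d ∧ y ∉ G.dartSide d, (f d.fst - f d.snd) ^ 2 := by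
  have : Nonempty V := ⟨x⟩
  obtain ⟨p, hp, hlen⟩ := hG.connected.exists_path_of_dist x y
  have hnodup := p.darts_nodup_of_support_nodup hp.support_nodup
  have hcard : (#p.darts.toFinset : ℝ) ≤ G.diam := by
    rw [List.toFinset_card_of_nodup hnodup, p.length_darts, hlen]
    exact_mod_cast dist_le_diam (connected_iff_ediam_ne_top.1 hG.connected)
  have hsub : p.darts.toFinset ⊆ univ.filter fun d => x ∈ G.dartSide d ∧ y ∉ G.dartSide d :=
    fun d hd => by simpa using hG.isAcyclic.mem_dartSide_of_mem_darts hp (List.mem_toFinset.1 hd)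
  calc (f x - f y) ^ 2 = (∑ d ∈ p.darts.toFinset, (f d.fst - f d.snd)) ^ 2 := by
        rw [List.sum_toFinset _ hnodup, p.sum_darts_sub]
    _ ≤ #p.darts.toFinset * ∑ d ∈ p.darts.toFinset, (f d.fst - f d.snd) ^ 2 :=
        sq_sum_le_card_mul_sum_sq
    _ ≤ G.diam * ∑ d with x ∈ G.dartSide d ∧ y ∉ G.dartSide d, (f d.fst - f d.snd) ^ 2 :=
        mul_le_mul hcard (sum_le_sum_of_subset_of_nonneg hsub fun _ _ _ => sq_nonneg _)
          (sum_nonneg fun _ _ => sq_nonneg _) (Nat.cast_nonneg _)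

theorem IsTree.sum_sum_mul_mul_sq_sub_le (hG : G.IsTree) {w : V → ℝ} (hw : ∀ x, 0 ≤ w x)
    (f : V → ℝ) :
    ∑ x, ∑ y, w x * w y * (f x - f y) ^ 2 ≤
      G.diam * ∑ d : G.Dart,
        (f d.fst - f d.snd) ^ 2 * ((∑ x ∈ G.dartSide d, w x) * ∑ y ∈ (G.dartSide d)ᶜ, w y) := by
  have hcut (S : Finset V) : (∑ x ∈ S, w x) * ∑ y ∈ Sᶜ, w y =
      ∑ x, ∑ y, if x ∈ S ∧ y ∉ S then w x * w y else 0 := by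
    rw [sum_mul_sum, ← sum_product', ← sum_product', ← sum_filter]
    congr 1
    ext ⟨x, y⟩
    simp
  calc ∑ x, ∑ y, w x * w y * (f x - f y) ^ 2
      ≤ ∑ x, ∑ y, w x * w y *
          (G.diam * ∑ d with x ∈ G.dartSide d ∧ y ∉ G.dartSide d, (f d.fst - f d.snd) ^ 2) := by
        gcongr with x _ y _
        · have := hw x; have := hw y; positivity
        · exact hG.sq_sub_le_diam_mul_sum f x y
    _ = _ := by
        simp only [hcut, sum_filter, mul_sum]
        conv_lhs => enter [2, x]; rw [sum_comm]
        rw [sum_comm]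
        refine sum_congr rfl fun d _ => sum_congr rfl fun x _ => sum_congr rfl fun y _ => ?_
        split_ifs <;> ring

end SimpleGraph

section AdjustedConductance

variable {V : Type*} [Fintype V] {u : V → V → ℝ}

theorem specGap_nonneg (hnn : ∀ x y, 0 ≤ u x y) : 0 ≤ specGap u := by
  refine Real.sInf_nonneg ?_
  rintro _ ⟨f, -, rfl⟩
  have hw : ∀ x, 0 ≤ ∑ y, u x y := fun x => sum_nonneg fun y _ => hnn x y
  have hE : 0 ≤ dirichletForm u f :=
    div_nonneg (sum_nonneg fun x _ => sum_nonneg fun y _ => mul_nonneg (hnn x y) (sq_nonneg _))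
      zero_le_two
  exact div_nonneg hE (sum_nonneg fun x _ => mul_nonneg (hw x) (sq_nonneg _))

variable [DecidableEq V]

theorem minAdjCond_nonneg (hnn : ∀ x y, 0 ≤ u x y) : 0 ≤ minAdjCond u := by
  have hw (S : Finset V) : 0 ≤ ∑ x ∈ S, ∑ y, u x y :=
    sum_nonneg fun x _ => sum_nonneg fun y _ => hnn x y
  have hcut (S : Finset V) : 0 ≤ ∑ x ∈ S, ∑ y ∈ Sᶜ, u x y :=
    sum_nonneg fun x _ => sum_nonneg fun y _ => hnn x y
  refine Real.sInf_nonneg ?_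
  rintro _ ⟨S, -, -, rfl⟩
  have := hw univ; have := hw S; have := hw Sᶜ; have := hcut S
  positivity

theorem minAdjCond_mul_le {S : Finset V}
    (hS : 0 < ∑ x ∈ S, ∑ y, u x y) (hSc : 0 < ∑ x ∈ Sᶜ, ∑ y, u x y) :
    minAdjCond u * ((∑ x ∈ S, ∑ y, u x y) * ∑ x ∈ Sᶜ, ∑ y, u x y) ≤
      (∑ a, ∑ b, u a b) * ∑ x ∈ S, ∑ y ∈ Sᶜ, u x y := by
  have hW : (∑ x ∈ S, ∑ y, u x y) + ∑ x ∈ Sᶜ, ∑ y, u x y = ∑ a, ∑ b, u a b :=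
    sum_add_sum_compl S _
  set W := ∑ a, ∑ b, u a b
  set A := ∑ x ∈ S, ∑ y, u x y
  set B := ∑ x ∈ Sᶜ, ∑ y, u x y
  have hWpos : 0 < W := hW ▸ add_pos hS hSc
  have hle : minAdjCond u ≤ ((∑ x ∈ S, ∑ y ∈ Sᶜ, u x y) / W) / ((A / W) * (B / W)) := by
    -- the infimum runs over a set indexed by the finitely many `S`, so it is bounded below
    refine csInf_le (Set.Finite.bddBelow ?_)
      ⟨S, div_pos hS hWpos, (div_lt_one hWpos).2 (by linarith), rfl⟩
    refine (Set.finite_range fun S : Finset V => ((∑ x ∈ S, ∑ y ∈ Sᶜ, u x y) / W) /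
      (((∑ x ∈ S, ∑ y, u x y) / W) * ((∑ x ∈ Sᶜ, ∑ y, u x y) / W))).subset ?_
    rintro _ ⟨S, -, -, rfl⟩
    exact ⟨S, rfl⟩
  calc minAdjCond u * (A * B)
      ≤ ((∑ x ∈ S, ∑ y ∈ Sᶜ, u x y) / W) / ((A / W) * (B / W)) * (A * B) := by
        gcongr
    _ = W * ∑ x ∈ S, ∑ y ∈ Sᶜ, u x y := by
        field_simp

end AdjustedConductance

namespace SimpleGraph

variable {V : Type*} [Fintype V] [DecidableEq V] {G : SimpleGraph V} {u : V → V → ℝ}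

theorem IsTree.minAdjCond_mul_varForm_le [DecidableRel G.Adj] (hG : G.IsTree)
    (hsupp : ∀ x y, u x y ≠ 0 → G.Adj x y) (hnn : ∀ x y, 0 ≤ u x y)
    (hw : ∀ x, 0 < ∑ y, u x y) (f : V → ℝ) :
    minAdjCond u * varForm u f ≤ G.diam * dirichletForm u f := by
  rcases isEmpty_or_nonempty V with hV | hV
  · simp [varForm, dirichletForm]
  set W := ∑ a, ∑ b, u a b
  have hW : 0 < W := sum_pos (fun x _ => hw x) univ_nonempty
  have hvar : 2 * W * varForm u f =
      ∑ x, ∑ y, (∑ z, u x z) * (∑ z, u y z) * (f x - f y) ^ 2 :=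
    (sum_sum_mul_mul_sq_sub (fun x => ∑ y, u x y) f hW.ne').symm
  have hdir : ∑ d : G.Dart, u d.fst d.snd * (f d.fst - f d.snd) ^ 2 = 2 * dirichletForm u f := by
    refine (sum_darts_eq_sum_sum (g := fun x y => u x y * (f x - f y) ^ 2)
      fun x y h => hsupp x y (left_ne_zero_of_mul h)).trans ?_
    rw [dirichletForm]
    ring
  have hcut (d : G.Dart) : minAdjCond u *
      ((∑ x ∈ G.dartSide d, ∑ y, u x y) * ∑ x ∈ (G.dartSide d)ᶜ, ∑ y, u x y) ≤
        W * u d.fst d.snd := by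
    rw [← hG.isAcyclic.sum_dartSide_compl hsupp d]
    exact minAdjCond_mul_le (sum_pos (fun x _ => hw x) ⟨d.fst, fst_mem_dartSide d⟩)
      (sum_pos (fun x _ => hw x) ⟨d.snd, mem_compl.2 (hG.isAcyclic.snd_notMem_dartSide d)⟩)
  have hM := minAdjCond_nonneg hnn
  suffices 2 * W * (minAdjCond u * varForm u f) ≤ 2 * W * (G.diam * dirichletForm u f) from
    le_of_mul_le_mul_left this (by positivity)
  calc 2 * W * (minAdjCond u * varForm u f)
      = minAdjCond u * ∑ x, ∑ y, (∑ z, u x z) * (∑ z, u y z) * (f x - f y) ^ 2 := by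
        rw [← hvar]; ring
    _ ≤ minAdjCond u * (G.diam * ∑ d : G.Dart, (f d.fst - f d.snd) ^ 2 *
          ((∑ x ∈ G.dartSide d, ∑ y, u x y) * ∑ x ∈ (G.dartSide d)ᶜ, ∑ y, u x y)) := by
        gcongr
        exact hG.sum_sum_mul_mul_sq_sub_le (fun x => (hw x).le) f
    _ = G.diam * ∑ d : G.Dart, (f d.fst - f d.snd) ^ 2 * (minAdjCond u *
          ((∑ x ∈ G.dartSide d, ∑ y, u x y) * ∑ x ∈ (G.dartSide d)ᶜ, ∑ y, u x y)) := by
        rw [mul_left_comm, mul_sum]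
        exact congrArg _ (sum_congr rfl fun d _ => by ring)
    _ ≤ G.diam * ∑ d : G.Dart, (f d.fst - f d.snd) ^ 2 * (W * u d.fst d.snd) := by
        gcongr _ * ∑ d, _ * ?_ with d
        exact hcut d
    _ = G.diam * (W * (2 * dirichletForm u f)) := by
        rw [← hdir]
        simp only [mul_sum]
        exact sum_congr rfl fun d _ => by ring
    _ = 2 * W * (G.diam * dirichletForm u f) := by ring

end SimpleGraph

theorem tree_specGap_ge_general {V : Type*} [Fintype V] [DecidableEq V]
    (T : SimpleGraph V) (hT : T.IsTree) (u : V → V → ℝ)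
    (hsupp : ∀ x y, 0 < u x y ↔ T.Adj x y) (hnn : ∀ x y, 0 ≤ u x y) :
    minAdjCond u / (T.diam : ℝ) ≤ specGap u := by
  classical
  rcases eq_or_ne T.diam 0 with hdiam | hdiam
  · rw [hdiam, Nat.cast_zero, div_zero]
    exact specGap_nonneg hnn
  have : Nontrivial V := SimpleGraph.nontrivial_of_diam_ne_zero hdiam
  have hsupp' : ∀ x y, u x y ≠ 0 → T.Adj x y := fun x y h =>
    (hsupp x y).1 ((hnn x y).lt_of_ne' h)
  have hw : ∀ x, 0 < ∑ y, u x y := fun x => by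
    obtain ⟨y, hxy⟩ := hT.connected.preconnected.exists_adj_of_nontrivial x
    exact sum_pos' (fun y _ => hnn x y) ⟨y, mem_univ y, (hsupp x y).2 hxy⟩
  obtain ⟨a, b, hab⟩ := exists_pair_ne V
  refine le_csInf ⟨_, fun v => if v = a then 1 else 0, ⟨a, b, by simp [hab.symm]⟩, rfl⟩ ?_
  rintro _ ⟨f, ⟨x, y, hf⟩, rfl⟩
  have hvar : 0 < varForm u f := sum_mul_sq_sub_pos _ f hw hf _
  rw [div_le_div_iff₀ (by positivity) hvar]
  linarith [hT.minAdjCond_mul_varForm_le hsupp' hnn hw f]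

/-- Canonical-paths bound for trees: the spectral gap of the random walk on a weighted tree is
at least the minimum adjusted conductance divided by the diameter of the tree. -/
theorem tree_specGap_ge {V : Type*} [Fintype V] [DecidableEq V]
    (T : SimpleGraph V) (hT : T.IsTree) (u : V → V → ℝ)
    (hsym : ∀ x y, u x y = u y x)
    (hsupp : ∀ x y, 0 < u x y ↔ T.Adj x y) (hnn : ∀ x y, 0 ≤ u x y) :
    minAdjCond u / (T.diam : ℝ) ≤ specGap u :=
  tree_specGap_ge_general T hT u hsupp hnn
end

section
/- Let G = (V,E) be a finite connected graph and π any strictly positive probability distribution on V. There exists a time-inhomogeneous Markov chain on G (a sequence of transition matrices each supported on edges of G together with self-loops) such that, from any initial distribution, the law of the chain after 2·diam(G) steps equals π exactly. -/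
/-!
Fix a root `r` and a map `f` sending every other vertex to a neighbour one step closer to `r`
(a breadth-first-search tree), so that `f^[diam G]` is constant equal to `r`. For `diam G` steps
the chain moves deterministically along `f`, which gathers any initial law at `r`. For the next
`diam G` steps it undoes the contraction of the target: the mass `(f^[k+1])_* π` at each vertex
is split among its `f`-preimages in proportion to `(f^[k])_* π`, and this Bayes reversal of `f`
is a stochastic kernel along tree edges sending `(f^[k+1])_* π` to `(f^[k])_* π`.
-/

open Finset

/-- Evolution of a distribution under a time-inhomogeneous sequence of kernels:
`evolve P μ t = μ P 1 ⋯ P t`. -/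
noncomputable def evolve {V : Type*} [Fintype V] (P : ℕ → V → V → ℝ) (μ : V → ℝ) :
    ℕ → V → ℝ
  | 0 => μ
  | (t + 1) => fun y => ∑ x, evolve P μ t x * P (t + 1) x y

/-- The diameter of a finite graph. -/
noncomputable def graphDiam {V : Type*} [Fintype V] (G : SimpleGraph V) : ℕ :=
  univ.sup fun x => univ.sup fun y => G.dist x y

namespace SimpleGraph

variable {V : Type*} {G : SimpleGraph V}

lemma dist_le_graphDiam [Fintype V] (G : SimpleGraph V) (x y : V) : G.dist x y ≤ graphDiam G :=
  (le_sup (f := fun y => G.dist x y) (mem_univ y)).trans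
    (le_sup (f := fun x => univ.sup fun y => G.dist x y) (mem_univ x))

lemma Connected.exists_adj_dist_add_one (hG : G.Connected) {x r : V} (hx : x ≠ r) :
    ∃ y, G.Adj x y ∧ G.dist y r + 1 = G.dist x r := by
  obtain ⟨p, hp⟩ := hG.exists_walk_length_eq_dist x r
  cases p with
  | nil => exact absurd rfl hx
  | cons hxy q =>
    refine ⟨_, hxy, le_antisymm ?_ ?_⟩
    · rw [← hp, Walk.length_cons]
      exact Nat.add_le_add_right (dist_le q) 1
    · calc G.dist x r ≤ G.dist x _ + G.dist _ r := hG.dist_triangle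
        _ = _ := by rw [dist_eq_one_iff_adj.2 hxy, add_comm]

lemma Connected.exists_map_dist_add_one (hG : G.Connected) (r : V) :
    ∃ f : V → V, f r = r ∧ ∀ x ≠ r, G.Adj x (f x) ∧ G.dist (f x) r + 1 = G.dist x r := by
  classical
  choose! g hg using fun x (hx : x ≠ r) => hG.exists_adj_dist_add_one hx
  exact ⟨Function.update g r r, by simp, fun x hx => by simpa [hx] using hg x hx⟩

lemma iterate_eq_of_dist_le {f : V → V} {r : V} (hfr : f r = r)
    (hf : ∀ x ≠ r, G.dist (f x) r + 1 = G.dist x r) {m : ℕ} {x : V} (hx : G.dist x r ≤ m) :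
    f^[m] x = r := by
  induction m generalizing x with
  | zero =>
    by_contra h
    have := hf x h
    omega
  | succ m ih =>
    by_cases h : x = r
    · subst h
      exact Function.iterate_fixed hfr _
    · have := hf x h
      exact ih (by omega)

end SimpleGraph

noncomputable section

namespace PerfectMixing

variable {V : Type*} [DecidableEq V]

def mapKernel (f : V → V) (x y : V) : ℝ :=
  if y = f x then 1 else 0

lemma mapKernel_nonneg (f : V → V) (x y : V) : 0 ≤ mapKernel f x y := by
  unfold mapKernel
  split_ifs <;> norm_num

lemma eq_of_mapKernel_ne_zero {f : V → V} {x y : V} (h : mapKernel f x y ≠ 0) : y = f x := by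
  by_contra hy
  exact h (if_neg hy)

variable [Fintype V]

def pushforward (f : V → V) (ν : V → ℝ) (y : V) : ℝ :=
  ∑ x with f x = y, ν x

lemma pushforward_nonneg {ν : V → ℝ} (hν : 0 ≤ ν) (f : V → V) : 0 ≤ pushforward f ν :=
  fun _ => sum_nonneg fun x _ => hν x

lemma le_pushforward_apply {ν : V → ℝ} (hν : 0 ≤ ν) (f : V → V) (y : V) :
    ν y ≤ pushforward f ν (f y) :=
  single_le_sum (fun x _ => hν x) (mem_filter.2 ⟨mem_univ y, rfl⟩)

@[simp]
lemma pushforward_id (ν : V → ℝ) : pushforward id ν = ν := by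
  ext y
  simp [pushforward, filter_eq']

lemma pushforward_pushforward (f g : V → V) (ν : V → ℝ) :
    pushforward g (pushforward f ν) = pushforward (g ∘ f) ν := by
  ext y
  simp only [pushforward, Function.comp_apply]
  rw [sum_comm' (t' := {z | g (f z) = y}) (s' := fun z => {f z})]
  · simp
  · intro x z
    simp only [mem_filter, mem_univ, true_and, mem_singleton]
    grind

lemma pushforward_eq_of_forall_eq {f : V → V} {r : V} (hf : ∀ x, f x = r) {μ ν : V → ℝ}
    (h : ∑ x, μ x = ∑ x, ν x) : pushforward f μ = pushforward f ν := by
  ext y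
  by_cases hy : r = y <;> simp [pushforward, hf, hy, h]

lemma sum_mul_mapKernel (μ : V → ℝ) (f : V → V) (y : V) :
    ∑ x, μ x * mapKernel f x y = pushforward f μ y := by
  simp [mapKernel, pushforward, sum_filter, eq_comm]

/-- Bayes reversal of `f` with respect to `ν`. Rows where `f_* ν` vanishes carry no mass; they
are filled with a self-loop only to keep the kernel stochastic. -/
def reverseKernel (f : V → V) (ν : V → ℝ) (x y : V) : ℝ :=
  if pushforward f ν x = 0 then (if y = x then 1 else 0)
  else if f y = x then ν y / pushforward f ν x else 0

lemma reverseKernel_nonneg {ν : V → ℝ} (hν : 0 ≤ ν) (f : V → V) (x y : V) :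
    0 ≤ reverseKernel f ν x y := by
  unfold reverseKernel
  have := pushforward_nonneg hν f x
  split_ifs <;> first | positivity | exact div_nonneg (hν y) this

lemma eq_or_eq_of_reverseKernel_ne_zero {f : V → V} {ν : V → ℝ} {x y : V}
    (h : reverseKernel f ν x y ≠ 0) : f y = x ∨ y = x := by
  by_contra! hxy
  simp [reverseKernel, hxy.1, hxy.2] at h

lemma sum_reverseKernel (f : V → V) (ν : V → ℝ) (x : V) : ∑ y, reverseKernel f ν x y = 1 := by
  unfold reverseKernel
  split_ifs with h
  · simp
  · rw [← sum_filter, ← sum_div]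
    exact div_self h

lemma sum_pushforward_mul_reverseKernel {ν : V → ℝ} (hν : 0 ≤ ν) (f : V → V) (y : V) :
    ∑ x, pushforward f ν x * reverseKernel f ν x y = ν y := by
  have hterm : ∀ x, pushforward f ν x * reverseKernel f ν x y = if f y = x then ν y else 0 := by
    intro x
    unfold reverseKernel
    by_cases h0 : pushforward f ν x = 0
    · have hνy : f y = x → ν y = 0 := by
        rintro rfl
        exact le_antisymm (h0 ▸ le_pushforward_apply hν f y) (hν y)
      simp only [h0, zero_mul]
      split_ifs <;> simp_all
    · simp only [h0, if_false]
      split_ifs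
      exacts [mul_div_cancel₀ _ h0, mul_zero _]
  simp [hterm]

/-- Step `t ∈ (D, 2 * D]` carries `(f^[2 * D - t + 1])_* π` to `(f^[2 * D - t])_* π`. -/
def mixingSchedule (f : V → V) (π : V → ℝ) (D t : ℕ) : V → V → ℝ :=
  if t ≤ D then mapKernel f else reverseKernel f (pushforward f^[2 * D - t] π)

lemma mixingSchedule_nonneg {π : V → ℝ} (hπ : 0 ≤ π) (f : V → V) (D t : ℕ) (x y : V) :
    0 ≤ mixingSchedule f π D t x y := by
  unfold mixingSchedule
  split_ifs
  exacts [mapKernel_nonneg f x y, reverseKernel_nonneg (pushforward_nonneg hπ _) f x y]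

lemma sum_mixingSchedule (f : V → V) (π : V → ℝ) (D t : ℕ) (x : V) :
    ∑ y, mixingSchedule f π D t x y = 1 := by
  unfold mixingSchedule
  split_ifs
  · simp [mapKernel]
  · exact sum_reverseKernel _ _ x

lemma eq_or_eq_of_mixingSchedule_ne_zero {f : V → V} {π : V → ℝ} {D t : ℕ} {x y : V}
    (h : mixingSchedule f π D t x y ≠ 0) : y = f x ∨ f y = x ∨ y = x := by
  unfold mixingSchedule at h
  split_ifs at h
  exacts [.inl (eq_of_mapKernel_ne_zero h), .inr (eq_or_eq_of_reverseKernel_ne_zero h)]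

lemma evolve_mixingSchedule_of_le (f : V → V) (π μ : V → ℝ) {D t : ℕ} (ht : t ≤ D) :
    evolve (mixingSchedule f π D) μ t = pushforward f^[t] μ := by
  induction t with
  | zero => exact (pushforward_id μ).symm
  | succ t ih =>
    ext y
    rw [evolve, ih (by omega), Function.iterate_succ', ← pushforward_pushforward,
      ← sum_mul_mapKernel]
    simp only [mixingSchedule, if_pos ht]

lemma evolve_mixingSchedule_add {f : V → V} {π μ : V → ℝ} {D k : ℕ} {r : V} (hπ : 0 ≤ π)
    (hf : ∀ x, f^[D] x = r) (hμ : ∑ x, μ x = ∑ x, π x) (hk : k ≤ D) :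
    evolve (mixingSchedule f π D) μ (D + k) = pushforward f^[D - k] π := by
  induction k with
  | zero =>
    rw [add_zero, evolve_mixingSchedule_of_le f π μ le_rfl, Nat.sub_zero]
    exact pushforward_eq_of_forall_eq hf hμ
  | succ k ih =>
    ext y
    have hlate : ¬D + k + 1 ≤ D := by omega
    have hrev : 2 * D - (D + k + 1) = D - (k + 1) := by omega
    have hprev : D - k = D - (k + 1) + 1 := by omega
    rw [← add_assoc, evolve, ih (by omega), hprev, Function.iterate_succ',
      ← pushforward_pushforward]
    simp only [mixingSchedule, if_neg hlate, hrev]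
    exact sum_pushforward_mul_reverseKernel (pushforward_nonneg hπ _) f y

end PerfectMixing

end

open PerfectMixing in
/-- On any finite connected graph `G` and for any strictly positive target distribution `π`,
there is a time-inhomogeneous Markov chain supported on the edges of `G` (plus self-loops)
whose law after `2·diam(G)` steps is exactly `π`, from any initial distribution. -/
theorem inhomogeneous_perfect_mixing {V : Type*} [Fintype V]
    (G : SimpleGraph V) (hG : G.Connected)
    (π : V → ℝ) (hpos : ∀ x, 0 < π x) (hsum : ∑ x, π x = 1) :
    ∃ P : ℕ → V → V → ℝ,
      (∀ t x y, 0 ≤ P t x y) ∧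
      (∀ t x, ∑ y, P t x y = 1) ∧
      (∀ t x y, P t x y ≠ 0 → G.Adj x y ∨ x = y) ∧
      ∀ μ0 : V → ℝ, (∀ x, 0 ≤ μ0 x) → ∑ x, μ0 x = 1 →
        ∀ y, evolve P μ0 (2 * graphDiam G) y = π y := by
  classical
  obtain ⟨r⟩ := hG.nonempty
  obtain ⟨f, hfr, hf⟩ := hG.exists_map_dist_add_one r
  have hf_adj : ∀ x, G.Adj x (f x) ∨ f x = x := fun x =>
    if hx : x = r then .inr (hx ▸ hfr) else .inl (hf x hx).1
  have hcollapse : ∀ x, f^[graphDiam G] x = r := fun x =>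
    SimpleGraph.iterate_eq_of_dist_le hfr (fun x hx => (hf x hx).2) (G.dist_le_graphDiam x r)
  refine ⟨mixingSchedule f π (graphDiam G), mixingSchedule_nonneg (fun x => (hpos x).le) f _,
    sum_mixingSchedule f π _, fun t x y h => ?_, fun μ0 _ hμ0 y => ?_⟩
  · rcases eq_or_eq_of_mixingSchedule_ne_zero h with rfl | rfl | rfl
    · exact (hf_adj x).imp id Eq.symm
    · exact (hf_adj y).imp SimpleGraph.Adj.symm id
    · exact .inr rfl
  · rw [two_mul, evolve_mixingSchedule_add (fun x => (hpos x).le) hcollapse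
      (hμ0.trans hsum.symm) le_rfl, Nat.sub_self, Function.iterate_zero, pushforward_id]
end

section
/- Let G = (V,E) be a finite graph, f : V → ℝ≥0, and define S_t = {u ∈ V : f(u)² > t} for t ≥ 0. Let G⃗_f be the directed graph with an edge (u,v) of weight f(v)² − f(u)² whenever {u,v} ∈ E and f(u) < f(v). Then ∫₀^∞ ν(E(S_t, S_tᶜ)) dt ≤ 2·ν(G⃗_f), where ν(E(S_t,S_tᶜ)) is the maximum (unweighted) matching size among edges crossing the cut at level t, and ν(G⃗_f) is the maximum weight of a directed matching in G⃗_f. -/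
/-!
Work with the potential `φ = f²` and fix a directed matching `F` of maximum weight. Let
`(a, b)` be an edge crossing the cut at level `t`, i.e. `φ b ≤ t < φ a`. If neither `b` is the
tail nor `a` the head of an arc of `F` crossing level `t`, then the arcs of `F` at `b` and at `a`
both lie on one side of `t`, so together they weigh less than `φ a - φ b`; replacing them by the
arc `(b, a)` would increase the weight of `F`. Hence every edge of a cut matching at level `t`
is charged to an endpoint of an arc of `F` crossing `t`, each such arc being charged at most
twice. Integrating over `t`, each arc `(u, v)` of `F` crosses exactly the levels in
`[φ u, φ v)`, which recovers its weight `φ v - φ u`.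
-/

open Finset MeasureTheory
open scoped Classical

/-- The maximum weight of a directed matching in the directed graph `G⃗_f`, which has an edge
`(u,v)` of weight `f(v)² − f(u)²` whenever `{u,v} ∈ E` and `f(u) < f(v)`. -/
noncomputable def dirMatchW {V : Type*} [Fintype V] (G : SimpleGraph V) (f : V → ℝ) : ℝ :=
  sSup {x : ℝ | ∃ M : Finset (V × V),
    (∀ p ∈ M, G.Adj p.1 p.2 ∧ f p.1 < f p.2) ∧
    (∀ p ∈ M, ∀ q ∈ M, p ≠ q → p.1 ≠ q.1 ∧ p.2 ≠ q.2) ∧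
    x = ∑ p ∈ M, (f p.2 ^ 2 - f p.1 ^ 2)}

theorem Finset.sum_le_of_card_le_one {ι M : Type*} [AddCommMonoid M] [Preorder M]
    {s : Finset ι} {g : ι → M} {c : M} (hs : s.card ≤ 1) (hc : 0 ≤ c)
    (h : ∀ i ∈ s, g i ≤ c) : ∑ i ∈ s, g i ≤ c := by
  obtain h0 | h1 := Nat.le_one_iff_eq_zero_or_eq_one.1 hs
  · simpa [Finset.card_eq_zero.1 h0] using hc
  · obtain ⟨i, rfl⟩ := Finset.card_eq_one.1 h1
    simpa using h i (mem_singleton_self i)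

theorem Finset.sum_lt_of_card_le_one {ι M : Type*} [AddCommMonoid M] [Preorder M]
    {s : Finset ι} {g : ι → M} {c : M} (hs : s.card ≤ 1) (hc : 0 < c)
    (h : ∀ i ∈ s, g i < c) : ∑ i ∈ s, g i < c := by
  obtain h0 | h1 := Nat.le_one_iff_eq_zero_or_eq_one.1 hs
  · simpa [Finset.card_eq_zero.1 h0] using hc
  · obtain ⟨i, rfl⟩ := Finset.card_eq_one.1 h1
    simpa using h i (mem_singleton_self i)

section DirMatching

variable {V : Type*}

/-- For `φ = f²` with `f ≥ 0`, these are the directed matchings of `G⃗_f`. -/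
structure IsDirMatching (G : SimpleGraph V) (φ : V → ℝ) (M : Finset (V × V)) : Prop where
  adj : ∀ p ∈ M, G.Adj p.1 p.2
  lt : ∀ p ∈ M, φ p.1 < φ p.2
  fst_injOn : Set.InjOn Prod.fst (M : Set (V × V))
  snd_injOn : Set.InjOn Prod.snd (M : Set (V × V))

noncomputable def dirWeight (φ : V → ℝ) (M : Finset (V × V)) : ℝ :=
  ∑ p ∈ M, (φ p.2 - φ p.1)

noncomputable def crossingArcs (φ : V → ℝ) (M : Finset (V × V)) (t : ℝ) : Finset (V × V) :=
  M.filter fun p => t ∈ Set.Ico (φ p.1) (φ p.2)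

theorem card_crossingArcs_eq_sum_indicator (φ : V → ℝ) (F : Finset (V × V)) (t : ℝ) :
    ((crossingArcs φ F t).card : ℝ) = ∑ p ∈ F, (Set.Ico (φ p.1) (φ p.2)).indicator 1 t := by
  rw [crossingArcs, natCast_card_filter]
  simp only [Set.indicator_apply, Pi.one_apply]

theorem integrable_indicator_Ico_one (a b : ℝ) :
    Integrable ((Set.Ico a b).indicator (1 : ℝ → ℝ)) :=
  (integrableOn_const (C := (1 : ℝ)) measure_Ico_lt_top.ne).integrable_indicator
    measurableSet_Ico

theorem integrable_card_crossingArcs (φ : V → ℝ) (F : Finset (V × V)) :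
    Integrable fun t => ((crossingArcs φ F t).card : ℝ) := by
  simp_rw [card_crossingArcs_eq_sum_indicator]
  exact integrable_finsetSum _ fun p _ => integrable_indicator_Ico_one _ _

variable {G : SimpleGraph V} {φ : V → ℝ} {F : Finset (V × V)}

@[simp]
theorem mem_crossingArcs {p : V × V} {t : ℝ} :
    p ∈ crossingArcs φ F t ↔ p ∈ F ∧ φ p.1 ≤ t ∧ t < φ p.2 := by
  simp [crossingArcs]

theorem integral_card_crossingArcs (hF : ∀ p ∈ F, φ p.1 ≤ φ p.2) :
    ∫ t, ((crossingArcs φ F t).card : ℝ) = dirWeight φ F := by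
  simp_rw [card_crossingArcs_eq_sum_indicator]
  rw [integral_finsetSum _ fun p _ => integrable_indicator_Ico_one _ _]
  refine sum_congr rfl fun p hp => ?_
  rw [integral_indicator_one measurableSet_Ico, Real.volume_real_Ico_of_le (hF p hp)]

theorem IsDirMatching.card_filter_fst_eq_le_one (hF : IsDirMatching G φ F) (b : V) :
    (F.filter fun r => r.1 = b).card ≤ 1 :=
  Finset.card_le_one.2 fun _ hr _ hr' =>
    hF.fst_injOn (mem_filter.1 hr).1 (mem_filter.1 hr').1
      ((mem_filter.1 hr).2.trans (mem_filter.1 hr').2.symm)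

theorem IsDirMatching.card_filter_snd_eq_le_one (hF : IsDirMatching G φ F) (a : V) :
    (F.filter fun r => r.2 = a).card ≤ 1 :=
  Finset.card_le_one.2 fun _ hr _ hr' =>
    hF.snd_injOn (mem_filter.1 hr).1 (mem_filter.1 hr').1
      ((mem_filter.1 hr).2.trans (mem_filter.1 hr').2.symm)

theorem IsDirMatching.insert_sdiff (hF : IsDirMatching G φ F) {a b : V} (hab : G.Adj b a)
    (hφ : φ b < φ a) :
    IsDirMatching G φ (insert (b, a) (F \ F.filter fun r => r.1 = b ∨ r.2 = a)) := by
  have hnot : (b, a) ∉ F \ F.filter fun r => r.1 = b ∨ r.2 = a := by simp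
  have hsub : F \ F.filter (fun r => r.1 = b ∨ r.2 = a) ⊆ F := sdiff_subset
  refine ⟨?_, ?_, ?_, ?_⟩
  · simp only [mem_insert, forall_eq_or_imp]
    exact ⟨hab, fun p hp => hF.adj p (hsub hp)⟩
  · simp only [mem_insert, forall_eq_or_imp]
    exact ⟨hφ, fun p hp => hF.lt p (hsub hp)⟩
  · rw [coe_insert, Set.injOn_insert (mod_cast hnot)]
    refine ⟨hF.fst_injOn.mono (mod_cast hsub), ?_⟩
    rintro ⟨r, hr, hrb⟩
    simp_all
  · rw [coe_insert, Set.injOn_insert (mod_cast hnot)]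
    refine ⟨hF.snd_injOn.mono (mod_cast hsub), ?_⟩
    rintro ⟨r, hr, hra⟩
    simp_all

theorem IsDirMatching.mem_image_crossingArcs (hF : IsDirMatching G φ F)
    (hmax : ∀ M, IsDirMatching G φ M → dirWeight φ M ≤ dirWeight φ F)
    {a b : V} {t : ℝ} (hab : G.Adj a b) (hb : φ b ≤ t) (ha : t < φ a) :
    b ∈ (crossingArcs φ F t).image Prod.fst ∨ a ∈ (crossingArcs φ F t).image Prod.snd := by
  by_contra! ⟨hb', ha'⟩
  simp only [mem_image, mem_crossingArcs, not_exists, not_and, and_imp] at hb' ha'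
  have hleave : ∑ r ∈ F.filter (fun r => r.1 = b), (φ r.2 - φ r.1) ≤ t - φ b := by
    refine sum_le_of_card_le_one (hF.card_filter_fst_eq_le_one b) (by linarith) fun r hr => ?_
    obtain ⟨hrF, rfl⟩ := mem_filter.1 hr
    have : φ r.2 ≤ t := not_lt.1 fun h => hb' r hrF hb h rfl
    linarith
  have henter : ∑ r ∈ F.filter (fun r => r.2 = a), (φ r.2 - φ r.1) < φ a - t := by
    refine sum_lt_of_card_le_one (hF.card_filter_snd_eq_le_one a) (by linarith) fun r hr => ?_
    obtain ⟨hrF, rfl⟩ := mem_filter.1 hr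
    have : t < φ r.1 := not_le.1 fun h => ha' r hrF h ha rfl
    linarith
  have hdisj : Disjoint (F.filter fun r => r.1 = b) (F.filter fun r => r.2 = a) :=
    disjoint_filter.2 fun r hr h1 h2 => hb' r hr (h1 ▸ hb) (h2 ▸ ha) h1
  have hremoved : dirWeight φ (F.filter fun r => r.1 = b ∨ r.2 = a) < φ a - φ b := by
    rw [dirWeight, filter_or, sum_union hdisj]
    linarith
  have hsplit := sum_sdiff (f := fun r => φ r.2 - φ r.1)
    (filter_subset (fun r => r.1 = b ∨ r.2 = a) F)
  have hswap := hmax _ (hF.insert_sdiff hab.symm (by linarith))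
  rw [dirWeight, sum_insert (by simp)] at hswap
  rw [dirWeight] at hremoved hswap
  linarith

theorem IsDirMatching.card_le_two_mul_card_crossingArcs (hF : IsDirMatching G φ F)
    (hmax : ∀ M, IsDirMatching G φ M → dirWeight φ M ≤ dirWeight φ F) {t : ℝ}
    {M : Finset (V × V)} (hM : ∀ p ∈ M, G.Adj p.1 p.2 ∧ φ p.2 ≤ t ∧ t < φ p.1)
    (hfst : Set.InjOn Prod.fst (M : Set (V × V)))
    (hsnd : Set.InjOn Prod.snd (M : Set (V × V))) :
    M.card ≤ 2 * (crossingArcs φ F t).card := by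
  set C := crossingArcs φ F t
  have hcover : M ⊆ M.filter (fun p => p.2 ∈ C.image Prod.fst) ∪
      M.filter (fun p => p.1 ∈ C.image Prod.snd) := fun p hp => by
    obtain ⟨hadj, hb, ha⟩ := hM p hp
    rw [mem_union, mem_filter, mem_filter]
    exact (hF.mem_image_crossingArcs hmax hadj hb ha).imp (⟨hp, ·⟩) (⟨hp, ·⟩)
  have hheads : (M.filter fun p => p.2 ∈ C.image Prod.fst).card ≤ C.card :=
    (card_le_card_of_injOn Prod.snd (fun p hp => (mem_filter.1 hp).2)
      (hsnd.mono (mod_cast filter_subset _ M))).trans card_image_le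
  have htails : (M.filter fun p => p.1 ∈ C.image Prod.snd).card ≤ C.card :=
    (card_le_card_of_injOn Prod.fst (fun p hp => (mem_filter.1 hp).2)
      (hfst.mono (mod_cast filter_subset _ M))).trans card_image_le
  calc M.card ≤ _ := card_le_card hcover
    _ ≤ _ := card_union_le _ _
    _ ≤ 2 * C.card := by omega

section Finite

variable [Fintype V]

theorem exists_isDirMatching_forall_dirWeight_le :
    ∃ F, IsDirMatching G φ F ∧ ∀ M, IsDirMatching G φ M → dirWeight φ M ≤ dirWeight φ F :=
  Set.exists_max_image {M | IsDirMatching G φ M} (dirWeight φ) (Set.toFinite _)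
    ⟨∅, by simp, by simp, by simp, by simp⟩

theorem dirWeight_le_dirMatchW {f : V → ℝ} (hf : ∀ u, 0 ≤ f u)
    (hF : IsDirMatching G (fun u => f u ^ 2) F) :
    dirWeight (fun u => f u ^ 2) F ≤ dirMatchW G f := by
  refine le_csSup ((Set.finite_range (dirWeight fun u => f u ^ 2)).bddAbove.mono ?_)
    ⟨F, fun p hp => ⟨hF.adj p hp, lt_of_pow_lt_pow_left₀ 2 (hf _) (hF.lt p hp)⟩,
      fun p hp q hq hpq => ⟨fun h => hpq (hF.fst_injOn hp hq h),
        fun h => hpq (hF.snd_injOn hp hq h)⟩, rfl⟩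
  rintro _ ⟨M, -, -, rfl⟩
  exact ⟨M, rfl⟩

theorem cutMatchNum_le_two_mul_card_crossingArcs (hF : IsDirMatching G φ F)
    (hmax : ∀ M, IsDirMatching G φ M → dirWeight φ M ≤ dirWeight φ F) (t : ℝ) :
    cutMatchNum G (univ.filter fun u => t < φ u) ≤ 2 * (crossingArcs φ F t).card := by
  refine csSup_le' ?_
  rintro n ⟨M, hcut, hdisj, rfl⟩
  refine hF.card_le_two_mul_card_crossingArcs hmax (fun p hp => ?_)
    (fun p hp q hq h => ?_) (fun p hp q hq h => ?_)
  · obtain ⟨h1, h2, h3⟩ := hcut p hp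
    simp only [mem_filter, mem_univ, true_and, not_lt] at h1 h2
    exact ⟨h3, h2, h1⟩
  · by_contra hne
    exact (hdisj p hp q hq hne).1 h
  · by_contra hne
    exact (hdisj p hp q hq hne).2.2.2 h

theorem setIntegral_cutMatchNum_le (hF : IsDirMatching G φ F)
    (hmax : ∀ M, IsDirMatching G φ M → dirWeight φ M ≤ dirWeight φ F) (s : Set ℝ) :
    ∫ t in s, (cutMatchNum G (univ.filter fun u => t < φ u) : ℝ) ≤ 2 * dirWeight φ F := by
  have hcross := (integrable_card_crossingArcs φ F).const_mul 2
  calc ∫ t in s, (cutMatchNum G (univ.filter fun u => t < φ u) : ℝ)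
      ≤ ∫ t in s, 2 * ((crossingArcs φ F t).card : ℝ) :=
        integral_mono_of_nonneg (.of_forall fun _ => by positivity) hcross.integrableOn
          (.of_forall fun t => by
            dsimp only
            exact_mod_cast cutMatchNum_le_two_mul_card_crossingArcs hF hmax t)
    _ ≤ ∫ t, 2 * ((crossingArcs φ F t).card : ℝ) :=
        setIntegral_le_integral hcross (.of_forall fun _ => by positivity)
    _ = 2 * dirWeight φ F := by
        rw [integral_const_mul, integral_card_crossingArcs fun p hp => (hF.lt p hp).le]

end Finite

end DirMatching

/-- Coarea-type inequality for matchings: with sweep sets `S_t = {u : f(u)² > t}`,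
`∫₀^∞ ν(E(S_t, S_tᶜ)) dt ≤ 2 ν(G⃗_f)`. -/
theorem integral_cut_matching_le {V : Type*} [Fintype V]
    (G : SimpleGraph V) (f : V → ℝ) (hf : ∀ u, 0 ≤ f u) :
    ∫ t in Set.Ioi (0 : ℝ),
        ((cutMatchNum G (univ.filter fun u => t < f u ^ 2) : ℝ))
      ≤ 2 * dirMatchW G f := by
  obtain ⟨F, hF, hmax⟩ :=
    exists_isDirMatching_forall_dirWeight_le (G := G) (φ := fun u => f u ^ 2)
  calc ∫ t in Set.Ioi (0 : ℝ), ((cutMatchNum G (univ.filter fun u => t < f u ^ 2) : ℝ))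
      ≤ 2 * dirWeight (fun u => f u ^ 2) F := setIntegral_cutMatchNum_le hF hmax _
    _ ≤ 2 * dirMatchW G f := by gcongr; exact dirWeight_le_dirMatchW hf hF
end

section
/- Let G = (V,E) be a finite graph and f : V → ℝ≥0 not identically zero. Let λ be the infimum over functions g : V → ℝ≥0 satisfying g(u)+g(v) ≥ (f(u)−f(v))² for all edges {u,v}, of (Σ_u g(u)) / (Σ_u f(u)²). Then there exists a set S contained in the support of f with matching conductance Υ(S) = ν(E(S,Sᶜ))/|S| ≤ 8√(2λ). -/
/-!
Sweep over the level sets `S_t = {u | t ≤ f u ^ 2}`, `t` a positive value of `f ^ 2`. With `t⁻` the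
next smaller value (or `0`), the intervals `(t⁻, t]` are disjoint and cover `(0, max f ^ 2]`, so
`∑ f ^ 2 ≤ ∑_t |S_t| (t - t⁻)`, and if `m` is the least conductance of the `S_t` then
`m ∑ f ^ 2 ≤ ∑_t ν(S_t) (t - t⁻)`. Charge every edge of a maximum cut matching of `S_t` to its
endpoint `w` of larger `g`: the levels charged to `w` have disjoint intervals inside
`[f w ^ 2 - 2 f w √(2 g w), (f w + √(2 g w)) ^ 2]`, of length `4 f w √(2 g w) + 2 g w`. Summing
over `w` and Cauchy–Schwarz give `m ≤ 4 q + q ^ 2` with `q = √(2 ∑ g / ∑ f ^ 2)`, hence `m ≤ 8 q`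
as `m ≤ 1`; then take the infimum over `g`.
-/

open Finset
open scoped Classical

/-- The value `λ`: the infimum over admissible `g` of `(Σ_u g(u)) / (Σ_u f(u)²)`. -/
noncomputable def lamVal {V : Type*} [Fintype V] (G : SimpleGraph V) (f : V → ℝ) : ℝ :=
  sInf {r : ℝ | ∃ g : V → ℝ, (∀ u, 0 ≤ g u) ∧
    (∀ u v, G.Adj u v → (f u - f v) ^ 2 ≤ g u + g v) ∧
    r = (∑ u, g u) / (∑ u, f u ^ 2)}

open MeasureTheory

theorem sum_sub_le_of_pairwiseDisjoint_Ioc {ι : Type*} {T : Finset ι} {l r : ι → ℝ} {lo hi : ℝ}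
    (hlr : ∀ i ∈ T, l i ≤ r i)
    (hdisj : (T : Set ι).PairwiseDisjoint fun i => Set.Ioc (l i) (r i))
    (hsub : ∀ i ∈ T, Set.Ioc (l i) (r i) ⊆ Set.Icc lo hi) (hlohi : lo ≤ hi) :
    ∑ i ∈ T, (r i - l i) ≤ hi - lo :=
  calc ∑ i ∈ T, (r i - l i) = ∑ i ∈ T, volume.real (Set.Ioc (l i) (r i)) :=
        sum_congr rfl fun i hiT => (Real.volume_real_Ioc_of_le (hlr i hiT)).symm
    _ = volume.real (⋃ i ∈ T, Set.Ioc (l i) (r i)) :=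
        (measureReal_biUnion_finset hdisj (fun _ _ => measurableSet_Ioc)
          fun _ _ => measure_Ioc_lt_top.ne).symm
    _ ≤ volume.real (Set.Icc lo hi) :=
        measureReal_mono (Set.iUnion₂_subset hsub) measure_Icc_lt_top.ne
    _ = hi - lo := Real.volume_real_Icc_of_le hlohi

theorem sub_le_sum_sub_of_Ioc_subset_biUnion {ι : Type*} {T : Finset ι} {l r : ι → ℝ} {a b : ℝ}
    (hlr : ∀ i ∈ T, l i ≤ r i) (hab : a ≤ b)
    (hcover : Set.Ioc a b ⊆ ⋃ i ∈ T, Set.Ioc (l i) (r i)) :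
    b - a ≤ ∑ i ∈ T, (r i - l i) :=
  calc b - a = volume.real (Set.Ioc a b) := (Real.volume_real_Ioc_of_le hab).symm
    _ ≤ volume.real (⋃ i ∈ T, Set.Ioc (l i) (r i)) :=
        measureReal_mono hcover (measure_biUnion_lt_top T.finite_toSet fun _ _ => by simp).ne
    _ ≤ ∑ i ∈ T, volume.real (Set.Ioc (l i) (r i)) := measureReal_biUnion_finset_le _ _
    _ = ∑ i ∈ T, (r i - l i) := sum_congr rfl fun i hi => Real.volume_real_Ioc_of_le (hlr i hi)

noncomputable def predBelow (A : Finset ℝ) (t : ℝ) : ℝ :=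
  (insert 0 (A.filter (· < t))).max' (insert_nonempty _ _)

section predBelow

variable {A : Finset ℝ} {t : ℝ}

theorem zero_le_predBelow : 0 ≤ predBelow A t :=
  le_max' _ _ (mem_insert_self _ _)

theorem le_predBelow {a : ℝ} (ha : a ∈ A) (hat : a < t) : a ≤ predBelow A t :=
  le_max' _ _ (mem_insert_of_mem (mem_filter.2 ⟨ha, hat⟩))

theorem predBelow_eq_zero_or_mem :
    predBelow A t = 0 ∨ predBelow A t ∈ A ∧ predBelow A t < t := by
  have h := max'_mem (insert 0 (A.filter (· < t))) (insert_nonempty _ _)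
  rwa [mem_insert, mem_filter] at h

theorem predBelow_lt (ht : 0 < t) : predBelow A t < t := by
  rcases predBelow_eq_zero_or_mem (A := A) (t := t) with h | h
  · exact h ▸ ht
  · exact h.2

theorem pairwiseDisjoint_Ioc_predBelow (A : Finset ℝ) :
    (A : Set ℝ).PairwiseDisjoint fun t => Set.Ioc (predBelow A t) t := by
  intro s hs t ht hst
  rcases hst.lt_or_gt with h | h
  · exact Set.Ioc_disjoint_Ioc_of_le (le_predBelow hs h)
  · exact (Set.Ioc_disjoint_Ioc_of_le (le_predBelow ht h)).symm

theorem Ioc_subset_biUnion_Ioc_predBelow {x : ℝ} (hx : x ∈ A) :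
    Set.Ioc 0 x ⊆ ⋃ t ∈ A.filter (· ≤ x), Set.Ioc (predBelow A t) t := by
  rintro y ⟨hy0, hyx⟩
  have hne : (A.filter (y ≤ ·)).Nonempty := ⟨x, mem_filter.2 ⟨hx, hyx⟩⟩
  obtain ⟨htA, hyt⟩ := mem_filter.1 ((A.filter (y ≤ ·)).min'_mem hne)
  simp only [Set.mem_iUnion, mem_filter, Set.mem_Ioc, exists_prop]
  refine ⟨_, ⟨htA, min'_le _ _ (mem_filter.2 ⟨hx, hyx⟩)⟩, ?_, hyt⟩
  rcases predBelow_eq_zero_or_mem with h | ⟨hpA, hpt⟩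
  · exact h ▸ hy0
  · by_contra! hle
    exact hpt.not_ge (min'_le _ _ (mem_filter.2 ⟨hpA, hle⟩))

theorem le_sum_sub_predBelow (hA : ∀ t ∈ A, 0 < t) {x : ℝ} (hx : x ∈ A) :
    x ≤ ∑ t ∈ A.filter (· ≤ x), (t - predBelow A t) := by
  simpa using sub_le_sum_sub_of_Ioc_subset_biUnion
    (fun t ht => (predBelow_lt (hA t (mem_filter.1 ht).1)).le) (hA x hx).le
    (Ioc_subset_biUnion_Ioc_predBelow hx)

theorem sum_sub_predBelow_le (hA : ∀ t ∈ A, 0 < t) {T : Finset ℝ} (hT : T ⊆ A) {lo hi : ℝ}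
    (hlohi : lo ≤ hi) (hwin : ∀ t ∈ T, lo ≤ predBelow A t ∧ t ≤ hi) :
    ∑ t ∈ T, (t - predBelow A t) ≤ hi - lo :=
  sum_sub_le_of_pairwiseDisjoint_Ioc (fun t ht => (predBelow_lt (hA t (hT ht))).le)
    ((pairwiseDisjoint_Ioc_predBelow A).subset (by simpa using hT))
    (fun t ht => Set.Ioc_subset_Icc_self.trans (Set.Icc_subset_Icc (hwin t ht).1 (hwin t ht).2))
    hlohi

end predBelow

section Matching

variable {V : Type*} (G : SimpleGraph V)

def IsCutMatching (S : Finset V) (M : Finset (V × V)) : Prop :=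
  (∀ p ∈ M, p.1 ∈ S ∧ p.2 ∉ S ∧ G.Adj p.1 p.2) ∧
    ∀ p ∈ M, ∀ q ∈ M, p ≠ q → p.1 ≠ q.1 ∧ p.1 ≠ q.2 ∧ p.2 ≠ q.1 ∧ p.2 ≠ q.2

variable {G} {S : Finset V} {M : Finset (V × V)}

theorem IsCutMatching.injOn {c : V × V → V} (hM : IsCutMatching G S M)
    (hc : ∀ p, c p = p.1 ∨ c p = p.2) : Set.InjOn c M := by
  intro p hp q hq hpq
  by_contra hne
  obtain ⟨h11, h12, h21, h22⟩ := hM.2 p hp q hq hne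
  rcases hc p with hp' | hp' <;> rcases hc q with hq' | hq' <;> rw [hp', hq'] at hpq
  exacts [h11 hpq, h12 hpq, h21 hpq, h22 hpq]

theorem IsCutMatching.card_le (hM : IsCutMatching G S M) : M.card ≤ S.card :=
  card_le_card_of_injOn Prod.fst (fun p hp => (hM.1 p hp).1) (hM.injOn fun _ => Or.inl rfl)

variable [Fintype V]

theorem exists_isCutMatching_card_eq (G : SimpleGraph V) (S : Finset V) :
    ∃ M, IsCutMatching G S M ∧ M.card = cutMatchNum G S := by
  have hset : {n | ∃ M, IsCutMatching G S M ∧ M.card = n} = {n : ℕ | ∃ M : Finset (V × V),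
      (∀ p ∈ M, p.1 ∈ S ∧ p.2 ∉ S ∧ G.Adj p.1 p.2) ∧
      (∀ p ∈ M, ∀ q ∈ M, p ≠ q → p.1 ≠ q.1 ∧ p.1 ≠ q.2 ∧ p.2 ≠ q.1 ∧ p.2 ≠ q.2) ∧
      M.card = n} := by
    simp only [IsCutMatching, and_assoc]
  rw [cutMatchNum, ← hset]
  have hne : {n | ∃ M, IsCutMatching G S M ∧ M.card = n}.Nonempty :=
    ⟨0, ∅, by simp [IsCutMatching]⟩
  refine Nat.sSup_mem hne ⟨S.card, ?_⟩
  rintro n ⟨M, hM, rfl⟩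
  exact hM.card_le

theorem cutMatchNum_le_card (G : SimpleGraph V) (S : Finset V) : cutMatchNum G S ≤ S.card := by
  obtain ⟨M, hM, hcard⟩ := exists_isCutMatching_card_eq G S
  exact hcard ▸ hM.card_le

end Matching

theorem sq_sub_le_and_le_add_sq {x y z s : ℝ} (hy : 0 ≤ y) (hyz : y ≤ z) (hzx : z ≤ x)
    (hxy : x - y ≤ s) : z ^ 2 - 2 * z * s ≤ y ^ 2 ∧ x ^ 2 ≤ (z + s) ^ 2 := by
  constructor
  · rcases le_or_gt z (2 * s) with hzs | hzs
    · nlinarith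
    · nlinarith
  · nlinarith

section Sweep

variable {V : Type*} [Fintype V] {f : V → ℝ}

noncomputable def sqLevels (f : V → ℝ) : Finset ℝ :=
  (univ.filter fun u => 0 < f u).image fun u => f u ^ 2

noncomputable def sweepSet (f : V → ℝ) (t : ℝ) : Finset V := univ.filter fun u => t ≤ f u ^ 2

theorem pos_of_mem_sqLevels {t : ℝ} (ht : t ∈ sqLevels f) : 0 < t := by
  obtain ⟨u, hu, rfl⟩ := mem_image.1 ht
  exact pow_pos (mem_filter.1 hu).2 2

theorem sq_mem_sqLevels {u : V} (hu : 0 < f u) : f u ^ 2 ∈ sqLevels f :=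
  mem_image_of_mem _ (mem_filter.2 ⟨mem_univ u, hu⟩)

theorem sweepSet_nonempty {t : ℝ} (ht : t ∈ sqLevels f) : (sweepSet f t).Nonempty := by
  obtain ⟨u, -, rfl⟩ := mem_image.1 ht
  exact ⟨u, mem_filter.2 ⟨mem_univ u, le_rfl⟩⟩

theorem pos_of_mem_sweepSet (hf : ∀ u, 0 ≤ f u) {t : ℝ} (ht : t ∈ sqLevels f) {u : V}
    (hu : u ∈ sweepSet f t) : 0 < f u := by
  refine (hf u).lt_of_ne' fun h0 => ?_
  have := (mem_filter.1 hu).2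
  rw [h0] at this
  linarith [pos_of_mem_sqLevels ht]

theorem sq_le_predBelow_of_not_mem_sweepSet (hf : ∀ u, 0 ≤ f u) {t : ℝ} {v : V}
    (hv : v ∉ sweepSet f t) : f v ^ 2 ≤ predBelow (sqLevels f) t := by
  rcases (hf v).lt_or_eq with hpos | hzero
  · exact le_predBelow (sq_mem_sqLevels hpos) (by simpa [sweepSet] using hv)
  · rw [← hzero, zero_pow two_ne_zero]
    exact zero_le_predBelow

theorem sum_sq_le_sum_card_sweepSet_mul (hf : ∀ u, 0 ≤ f u) :
    ∑ u, f u ^ 2 ≤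
      ∑ t ∈ sqLevels f, ((sweepSet f t).card : ℝ) * (t - predBelow (sqLevels f) t) := by
  have hswap : ∑ t ∈ sqLevels f, ((sweepSet f t).card : ℝ) * (t - predBelow (sqLevels f) t) =
      ∑ u, ∑ t ∈ (sqLevels f).filter (· ≤ f u ^ 2), (t - predBelow (sqLevels f) t) := by
    simp only [← nsmul_eq_mul, ← sum_const]
    exact sum_comm' fun t u => by simp [sweepSet]
  rw [hswap]
  refine sum_le_sum fun u _ => ?_
  rcases (hf u).lt_or_eq with hpos | hzero
  · exact le_sum_sub_predBelow (fun _ => pos_of_mem_sqLevels) (sq_mem_sqLevels hpos)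
  · rw [← hzero, zero_pow two_ne_zero]
    exact sum_nonneg fun t ht =>
      sub_nonneg.2 (predBelow_lt (pos_of_mem_sqLevels (mem_filter.1 ht).1)).le

variable {G : SimpleGraph V} {g : V → ℝ}

theorem window_of_isCutMatching (hf : ∀ u, 0 ≤ f u)
    (hadm : ∀ u v, G.Adj u v → (f u - f v) ^ 2 ≤ g u + g v) {t : ℝ} {M : Finset (V × V)}
    (hM : IsCutMatching G (sweepSet f t) M) {p : V × V} (hp : p ∈ M) {w : V}
    (hw : w = p.1 ∨ w = p.2) (hgw : g p.1 ≤ g w ∧ g p.2 ≤ g w) :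
    f w ^ 2 - 2 * f w * √(2 * g w) ≤ predBelow (sqLevels f) t ∧
      t ≤ (f w + √(2 * g w)) ^ 2 := by
  obtain ⟨hin, hout, hadj⟩ := hM.1 p hp
  have hin' : t ≤ f p.1 ^ 2 := (mem_filter.1 hin).2
  have hout' : f p.2 ^ 2 < t := by simpa [sweepSet] using hout
  have hle : f p.2 ≤ f p.1 :=
    ((pow_lt_pow_iff_left₀ (hf _) (hf _) two_ne_zero).1 (hout'.trans_le hin')).le
  have hdiff : f p.1 - f p.2 ≤ √(2 * g w) :=
    Real.le_sqrt_of_sq_le (by linarith [hadm _ _ hadj])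
  have hwin := sq_sub_le_and_le_add_sq (hf p.2) (z := f w)
    (by rcases hw with rfl | rfl <;> simp [hle]) (by rcases hw with rfl | rfl <;> simp [hle]) hdiff
  exact ⟨hwin.1.trans (sq_le_predBelow_of_not_mem_sweepSet hf hout), hin'.trans hwin.2⟩

theorem sum_cutMatchNum_mul_le (hf : ∀ u, 0 ≤ f u) (hg : ∀ u, 0 ≤ g u)
    (hadm : ∀ u v, G.Adj u v → (f u - f v) ^ 2 ≤ g u + g v) :
    ∑ t ∈ sqLevels f, (cutMatchNum G (sweepSet f t) : ℝ) * (t - predBelow (sqLevels f) t) ≤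
      ∑ w, (4 * f w * √(2 * g w) + 2 * g w) := by
  set A := sqLevels f
  choose M hM hcard using fun t => exists_isCutMatching_card_eq G (sweepSet f t)
  -- charge each matching edge `p` to its endpoint `w` of larger `g`, so `(f p.1 - f p.2)² ≤ 2 g w`
  let c : V × V → V := fun p => if g p.2 ≤ g p.1 then p.1 else p.2
  have hc : ∀ p, c p = p.1 ∨ c p = p.2 := fun p => by
    by_cases h : g p.2 ≤ g p.1 <;> simp [c, h]
  have hcg : ∀ p, g p.1 ≤ g (c p) ∧ g p.2 ≤ g (c p) := fun p => by
    simp only [c]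
    split_ifs with h <;> constructor <;> linarith
  have hcount : ∀ t, cutMatchNum G (sweepSet f t) = ((M t).image c).card := fun t => by
    rw [card_image_of_injOn ((hM t).injOn hc), hcard]
  calc ∑ t ∈ A, (cutMatchNum G (sweepSet f t) : ℝ) * (t - predBelow A t)
      = ∑ t ∈ A, ∑ w ∈ (M t).image c, (t - predBelow A t) := by
        simp only [hcount, sum_const, nsmul_eq_mul]
    _ = ∑ w, ∑ t ∈ A.filter fun t => w ∈ (M t).image c, (t - predBelow A t) :=
        sum_comm' fun t w => by simp
    _ ≤ ∑ w, ((f w + √(2 * g w)) ^ 2 - (f w ^ 2 - 2 * f w * √(2 * g w))) := by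
        refine sum_le_sum fun w _ => sum_sub_predBelow_le (fun _ => pos_of_mem_sqLevels)
          (filter_subset _ _) (by nlinarith [hf w, Real.sqrt_nonneg (2 * g w)]) fun t ht => ?_
        obtain ⟨p, hp, rfl⟩ := mem_image.1 (mem_filter.1 ht).2
        exact window_of_isCutMatching hf hadm (hM t) hp (hc p) (hcg p)
    _ = ∑ w, (4 * f w * √(2 * g w) + 2 * g w) := sum_congr rfl fun w _ => by
        rw [add_sq, Real.sq_sqrt (by linarith [hg w])]
        ring

end Sweep

theorem le_eight_mul_sqrt_of_mul_le {m E F : ℝ} (hm : m ≤ 1) (hE : 0 ≤ E) (hF : 0 < F)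
    (h : m * F ≤ 4 * √F * √(2 * E) + 2 * E) : m ≤ 8 * √(2 * (E / F)) := by
  set q := √(2 * (E / F))
  have hq : 0 ≤ q := Real.sqrt_nonneg _
  have h2E : 2 * E = q ^ 2 * F := by
    rw [Real.sq_sqrt (by positivity)]
    field_simp
  have hroot : √F * √(2 * E) = q * F := by
    rw [h2E, Real.sqrt_mul' _ hF.le, Real.sqrt_sq hq, mul_left_comm, Real.mul_self_sqrt hF.le]
  rw [mul_assoc 4, hroot, h2E] at h
  have h' : m ≤ 4 * q + q ^ 2 := le_of_mul_le_mul_right (by linarith) hF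
  rcases le_or_gt q 4 with h4 | h4 <;> nlinarith

theorem le_eight_mul_sqrt_two_mul_sInf {R : Set ℝ} {m : ℝ} (hR : R.Nonempty) (hm : 0 ≤ m)
    (h : ∀ r ∈ R, m ≤ 8 * √(2 * r)) : m ≤ 8 * √(2 * sInf R) := by
  rcases hm.eq_or_lt with rfl | hm
  · positivity
  have hsq : (m / 8) ^ 2 / 2 ≤ sInf R := le_csInf hR fun r hr => by
    have := (Real.le_sqrt' (by positivity)).1 (show m / 8 ≤ √(2 * r) by linarith [h r hr])
    linarith
  have := Real.le_sqrt_of_sq_le (show (m / 8) ^ 2 ≤ 2 * sInf R by linarith)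
  linarith

section Conductance

variable {V : Type*} [Fintype V] (G : SimpleGraph V)

noncomputable def matchingConductance (S : Finset V) : ℝ := cutMatchNum G S / S.card

theorem matchingConductance_nonneg (S : Finset V) : 0 ≤ matchingConductance G S := by
  unfold matchingConductance
  positivity

theorem matchingConductance_le_one (S : Finset V) : matchingConductance G S ≤ 1 :=
  div_le_one_of_le₀ (by exact_mod_cast cutMatchNum_le_card G S) (Nat.cast_nonneg _)

variable {G} {f g : V → ℝ}

theorem matchingConductance_le_of_forall_le (hf : ∀ u, 0 ≤ f u) (hg : ∀ u, 0 ≤ g u)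
    (hadm : ∀ u v, G.Adj u v → (f u - f v) ^ 2 ≤ g u + g v) {t₀ : ℝ} (ht₀ : t₀ ∈ sqLevels f)
    (hmin : ∀ t ∈ sqLevels f,
      matchingConductance G (sweepSet f t₀) ≤ matchingConductance G (sweepSet f t)) :
    matchingConductance G (sweepSet f t₀) ≤ 8 * √(2 * ((∑ u, g u) / ∑ u, f u ^ 2)) := by
  set m := matchingConductance G (sweepSet f t₀)
  set A := sqLevels f
  obtain ⟨u₀, hu₀⟩ := sweepSet_nonempty ht₀
  have hF : 0 < ∑ u, f u ^ 2 :=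
    sum_pos' (fun u _ => sq_nonneg (f u))
      ⟨u₀, mem_univ _, pow_pos (pos_of_mem_sweepSet hf ht₀ hu₀) 2⟩
  refine le_eight_mul_sqrt_of_mul_le (matchingConductance_le_one G _) (sum_nonneg fun u _ => hg u)
    hF ?_
  calc m * ∑ u, f u ^ 2
      ≤ m * ∑ t ∈ A, ((sweepSet f t).card : ℝ) * (t - predBelow A t) :=
        mul_le_mul_of_nonneg_left (sum_sq_le_sum_card_sweepSet_mul hf)
          (matchingConductance_nonneg G _)
    _ = ∑ t ∈ A, m * (sweepSet f t).card * (t - predBelow A t) := by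
        rw [mul_sum]
        simp only [mul_assoc]
    _ ≤ ∑ t ∈ A, (cutMatchNum G (sweepSet f t) : ℝ) * (t - predBelow A t) := by
        refine sum_le_sum fun t ht => mul_le_mul_of_nonneg_right ?_
          (sub_nonneg.2 (predBelow_lt (pos_of_mem_sqLevels ht)).le)
        have hcard : (0 : ℝ) < (sweepSet f t).card := by
          exact_mod_cast (sweepSet_nonempty ht).card_pos
        exact (le_div_iff₀ hcard).1 (hmin t ht)
    _ ≤ ∑ w, (4 * f w * √(2 * g w) + 2 * g w) := sum_cutMatchNum_mul_le hf hg hadm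
    _ = 4 * ∑ w, f w * √(2 * g w) + 2 * ∑ w, g w := by
        rw [sum_add_distrib, mul_sum, mul_sum]
        simp only [mul_assoc]
    _ ≤ 4 * (√(∑ u, f u ^ 2) * √(2 * ∑ u, g u)) + 2 * ∑ u, g u := by
        gcongr
        refine (Real.sum_mul_le_sqrt_mul_sqrt _ _ _).trans_eq ?_
        simp only [Real.sq_sqrt (mul_nonneg zero_le_two (hg _)), mul_sum]
    _ = 4 * √(∑ u, f u ^ 2) * √(2 * ∑ u, g u) + 2 * ∑ u, g u := by ring

end Conductance

theorem lamVal_set_nonempty {V : Type*} [Fintype V] (G : SimpleGraph V) {f : V → ℝ}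
    (hf : ∀ u, 0 ≤ f u) : {r : ℝ | ∃ g : V → ℝ, (∀ u, 0 ≤ g u) ∧
      (∀ u v, G.Adj u v → (f u - f v) ^ 2 ≤ g u + g v) ∧
      r = (∑ u, g u) / (∑ u, f u ^ 2)}.Nonempty :=
  ⟨_, fun u => f u ^ 2, fun u => sq_nonneg _,
    fun u v _ => by nlinarith [mul_nonneg (hf u) (hf v)], rfl⟩

/-- Sweep-cut lemma: there is a set `S` inside the support of `f` whose matching conductance
is at most `8·√(2λ)`. -/
theorem exists_sweep_set {V : Type*} [Fintype V] (G : SimpleGraph V)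
    (f : V → ℝ) (hf : ∀ u, 0 ≤ f u) (hne : ∃ u, f u ≠ 0) :
    ∃ S : Finset V, S.Nonempty ∧ (∀ u ∈ S, 0 < f u) ∧
      (cutMatchNum G S : ℝ) / S.card ≤ 8 * Real.sqrt (2 * lamVal G f) := by
  obtain ⟨u₀, hu₀⟩ := hne
  obtain ⟨t₀, ht₀, hmin⟩ := exists_min_image (sqLevels f)
    (fun t => matchingConductance G (sweepSet f t)) ⟨_, sq_mem_sqLevels ((hf u₀).lt_of_ne' hu₀)⟩
  refine ⟨sweepSet f t₀, sweepSet_nonempty ht₀, fun u hu => pos_of_mem_sweepSet hf ht₀ hu,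
    le_eight_mul_sqrt_two_mul_sInf (lamVal_set_nonempty G hf) (matchingConductance_nonneg G _) ?_⟩
  rintro r ⟨g, hg, hadm, rfl⟩
  exact matchingConductance_le_of_forall_le hf hg hadm ht₀ hmin
end

section
/- Easy direction of the matching-conductance Cheeger inequality: for any finite graph G, the one-dimensional relaxation value λ*(G) satisfies λ*(G) ≤ 2·Υ*(G), where Υ*(G) is the matching conductance of G. -/
open Finset
open scoped Classical

/-- The one-dimensional relaxation value `λ*(G)`: the infimum over pairs `(f, g)` with
`Σ f = 0`, `f ≢ 0`, `g ≥ 0`, and `g(u)+g(v) ≥ (f(u)−f(v))²` on edges, of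
`(Σ g)/(Σ f²)`. -/
noncomputable def oneDimGap {V : Type*} [Fintype V] (G : SimpleGraph V) : ℝ :=
  sInf {r : ℝ | ∃ f g : V → ℝ, (∑ u, f u) = 0 ∧ (∃ u, f u ≠ 0) ∧
    (∀ u, 0 ≤ g u) ∧ (∀ u v, G.Adj u v → (f u - f v) ^ 2 ≤ g u + g v) ∧
    r = (∑ u, g u) / (∑ u, f u ^ 2)}

/-!
Fix `S` with `2 * #S ≤ #V` and take the mean-zero step function `f = #Sᶜ` on `S`, `f = -#S` on
`Sᶜ`, which jumps by `#V` across the cut. By König's theorem for the bipartite graph of crossing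
edges, obtained here from the deficiency version of Hall's theorem, the cut has a vertex cover `C`
with `#C ≤ ν(E(S, Sᶜ))`. Then `g = #V ^ 2` on `C` (and `0` elsewhere) is admissible, and
`∑ g / ∑ f ^ 2 = #C * #V ^ 2 / (#S * #Sᶜ * #V) = #C * (1 / #S + 1 / #Sᶜ) ≤ 2 * ν(E(S, Sᶜ)) / #S`.
-/

def IsRelMatching {α β : Type*} (r : α → β → Prop) (M : Finset (α × β)) : Prop :=
  (∀ p ∈ M, r p.1 p.2) ∧ Set.InjOn Prod.fst (M : Set (α × β)) ∧
    Set.InjOn Prod.snd (M : Set (α × β))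

theorem exists_isRelMatching_of_card_le_card_biUnion_add {α β : Type*} [Fintype α]
    (t : α → Finset β) (d : ℕ) (ht : ∀ A : Finset α, #A ≤ #(A.biUnion t) + d) :
    ∃ M, IsRelMatching (fun a b => b ∈ t a) M ∧ Fintype.card α ≤ #M + d := by
  -- pad every `t a` with the same `d` dummy elements, so that Hall's condition holds
  let t' : α → Finset (β ⊕ Fin d) := fun a => (t a).map .inl ∪ univ.map .inr
  have hall : ∀ A : Finset α, #A ≤ #(A.biUnion t') := by
    intro A
    rcases A.eq_empty_or_nonempty with rfl | hA
    · simp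
    have : A.biUnion t' = (A.biUnion t).map .inl ∪ univ.map .inr := by
      ext x; rcases x with b | i <;> simp [t', hA.exists_mem]
    rw [this, card_union_of_disjoint (by simp [disjoint_left]), card_map, card_map, card_univ,
      Fintype.card_fin]
    exact ht A
  obtain ⟨F, hF, hFt⟩ := (all_card_le_biUnion_card_iff_existsInjective' t').1 hall
  set M := univ.filterMap (fun a => (F a).getLeft?.map (a, ·))
    (fun a a' p ha ha' => by simp at ha ha'; grind)
  have mem_M : ∀ p, p ∈ M ↔ F p.1 = .inl p.2 := by
    intro p
    simp only [M, mem_filterMap, mem_univ, true_and, Option.map_eq_some_iff,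
      Sum.getLeft?_eq_some_iff]
    constructor
    · rintro ⟨a, b, h, rfl⟩; exact h
    · intro h; exact ⟨p.1, p.2, h, rfl⟩
  refine ⟨M, ⟨fun p hp => ?_, fun p hp q hq h => ?_, fun p hp q hq h => ?_⟩, ?_⟩
  · simpa [t', (mem_M p).1 hp] using hFt p.1
  · have := (mem_M p).1 hp
    rw [h, (mem_M q).1 hq, Sum.inl.injEq] at this
    exact Prod.ext h this.symm
  · exact Prod.ext (hF (((mem_M p).1 hp).trans (h ▸ ((mem_M q).1 hq).symm))) h
  · calc Fintype.card α = #(univ.image F) := (card_image_of_injective _ hF).symm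
      _ ≤ #(M.image (Sum.inl ∘ Prod.snd) ∪ univ.image (Sum.inr : Fin d → β ⊕ Fin d)) := by
          apply card_le_card
          intro x hx
          obtain ⟨a, -, rfl⟩ := mem_image.1 hx
          rcases h : F a with b | i
          · exact mem_union_left _ (mem_image.2 ⟨(a, b), (mem_M _).2 h, rfl⟩)
          · exact mem_union_right _ (mem_image.2 ⟨i, mem_univ _, rfl⟩)
      _ ≤ #M + d :=
          (card_union_le _ _).trans (add_le_add card_image_le (card_image_le.trans (by simp)))

theorem exists_cover_card_le_card_isRelMatching {α β : Type*} [Fintype α] [Fintype β]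
    (r : α → β → Prop) :
    ∃ M A B, IsRelMatching r M ∧ #A + #B ≤ #M ∧ ∀ a b, r a b → a ∈ A ∨ b ∈ B := by
  let t : α → Finset β := fun a => univ.filter (r a)
  -- a set `W₀` of maximal deficiency `#W₀ - #N(W₀)`; the cover is `W₀ᶜ ∪ N(W₀)`
  obtain ⟨W₀, -, hW₀⟩ := exists_max_image univ
    (fun W : Finset α => (#W : ℤ) - #(W.biUnion t)) univ_nonempty
  have hW₀_nonneg := hW₀ ∅ (mem_univ _)
  simp only [card_empty, biUnion_empty, Nat.cast_zero, sub_zero] at hW₀_nonneg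
  have hdef : ∀ W : Finset α, #W ≤ #(W.biUnion t) + (#W₀ - #(W₀.biUnion t)) := by
    intro W
    have := hW₀ W (mem_univ _)
    omega
  obtain ⟨M, hM, hcard⟩ := exists_isRelMatching_of_card_le_card_biUnion_add t _ hdef
  refine ⟨M, W₀ᶜ, W₀.biUnion t, ⟨fun p hp => ?_, hM.2⟩, ?_, fun a b hab => ?_⟩
  · simpa [t] using hM.1 p hp
  · have := card_le_univ W₀
    rw [card_compl]
    omega
  · by_cases ha : a ∈ W₀
    · exact .inr (mem_biUnion.2 ⟨a, ha, by simpa [t]⟩)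
    · exact .inl (mem_compl.2 ha)

theorem sum_ite_mem_univ {V M : Type*} [Fintype V] [AddCommMonoid M] (S : Finset V) (x y : M) :
    ∑ u, (if u ∈ S then x else y) = #S • x + #Sᶜ • y := by
  rw [sum_ite, ← compl_filter, filter_univ_mem, sum_const, sum_const]

def CoversCut {V : Type*} (G : SimpleGraph V) (S C : Finset V) : Prop :=
  ∀ u v, u ∈ S → v ∉ S → G.Adj u v → u ∈ C ∨ v ∈ C

theorem sq_sub_ite_le_of_coversCut {V : Type*} {G : SimpleGraph V} {S C : Finset V}
    (hC : CoversCut G S C) (a b : ℝ) {u v : V} (huv : G.Adj u v) :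
    ((if u ∈ S then a else b) - if v ∈ S then a else b) ^ 2 ≤
      (if u ∈ C then (a - b) ^ 2 else 0) + if v ∈ C then (a - b) ^ 2 else 0 := by
  have hab := sq_nonneg (a - b)
  have hba : (b - a) ^ 2 = (a - b) ^ 2 := by ring
  by_cases hu : u ∈ S <;> by_cases hv : v ∈ S
  · simp only [hu, hv, if_true, sub_self, ne_eq, OfNat.ofNat_ne_zero, not_false_eq_true,
      zero_pow]
    split_ifs <;> positivity
  · rcases hC u v hu hv huv with h | h <;> simp [hu, hv, h] <;> split_ifs <;> linarith
  · rcases hC v u hv hu huv.symm with h | h <;> simp [hu, hv, h, hba] <;> split_ifs <;> linarith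
  · simp only [hu, hv, if_false, sub_self, ne_eq, OfNat.ofNat_ne_zero, not_false_eq_true,
      zero_pow]
    split_ifs <;> positivity

section Graph

variable {V : Type*} [Fintype V] (G : SimpleGraph V)

theorem card_le_cutMatchNum {S : Finset V} {M : Finset (V × V)}
    (hM : IsRelMatching (fun u v => u ∈ S ∧ v ∉ S ∧ G.Adj u v) M) : #M ≤ cutMatchNum G S := by
  refine le_csSup ⟨Fintype.card (V × V), ?_⟩ ⟨M, hM.1, fun p hp q hq hpq => ?_, rfl⟩
  · rintro n ⟨M', -, -, rfl⟩
    exact card_le_univ M'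
  have hp' := hM.1 p hp
  have hq' := hM.1 q hq
  exact ⟨fun h => hpq (hM.2.1 hp hq h), fun h => hq'.2.1 (h ▸ hp'.1),
    fun h => hp'.2.1 (h ▸ hq'.1), fun h => hpq (hM.2.2 hp hq h)⟩

theorem exists_coversCut_card_le_cutMatchNum (S : Finset V) :
    ∃ C : Finset V, #C ≤ cutMatchNum G S ∧ CoversCut G S C := by
  obtain ⟨M, A, B, hM, hcard, hcover⟩ :=
    exists_cover_card_le_card_isRelMatching (fun u v => u ∈ S ∧ v ∉ S ∧ G.Adj u v)
  refine ⟨A ∪ B, ((card_union_le A B).trans hcard).trans (card_le_cutMatchNum G hM),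
    fun u v hu hv huv => ?_⟩
  rcases hcover u v ⟨hu, hv, huv⟩ with h | h
  · exact .inl (mem_union_left _ h)
  · exact .inr (mem_union_right _ h)

theorem oneDimGap_le {f g : V → ℝ} (hf : ∑ u, f u = 0) (hf₀ : ∃ u, f u ≠ 0) (hg : ∀ u, 0 ≤ g u)
    (hfg : ∀ u v, G.Adj u v → (f u - f v) ^ 2 ≤ g u + g v) :
    oneDimGap G ≤ (∑ u, g u) / ∑ u, f u ^ 2 := by
  refine csInf_le ⟨0, ?_⟩ ⟨f, g, hf, hf₀, hg, hfg, rfl⟩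
  rintro r ⟨f, g, -, -, hg, -, rfl⟩
  exact div_nonneg (sum_nonneg fun u _ => hg u) (sum_nonneg fun u _ => sq_nonneg _)

theorem oneDimGap_of_subsingleton [Subsingleton V] : oneDimGap G = 0 := by
  unfold oneDimGap
  refine (congrArg sInf (Set.eq_empty_of_forall_notMem ?_)).trans Real.sInf_empty
  rintro r ⟨f, -, hf, ⟨u, hu⟩, -⟩
  exact hu (by rwa [Fintype.sum_subsingleton _ u] at hf)

theorem oneDimGap_le_card_mul_inv_add_inv {S C : Finset V} (hS : S.Nonempty)
    (hSc : Sᶜ.Nonempty) (hC : CoversCut G S C) :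
    oneDimGap G ≤ #C * ((#S : ℝ)⁻¹ + (#Sᶜ : ℝ)⁻¹) := by
  set s : ℝ := (#S : ℝ)
  set t : ℝ := (#Sᶜ : ℝ)
  have hs : 0 < s := by simpa [s] using hS.card_pos
  have ht : 0 < t := by simpa [t] using hSc.card_pos
  have key := oneDimGap_le G (f := fun u => if u ∈ S then t else -s)
    (g := fun u => if u ∈ C then (t - -s) ^ 2 else 0) ?_ ?_ ?_
    (fun u v => sq_sub_ite_le_of_coversCut hC t (-s))
  · convert key using 1
    simp only [ite_pow, sum_ite_mem_univ, nsmul_eq_mul, mul_zero, add_zero]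
    field_simp
    ring
  · simp only [sum_ite_mem_univ, nsmul_eq_mul]
    ring
  · obtain ⟨u, hu⟩ := hS
    exact ⟨u, by simp [hu, ht.ne']⟩
  · intro u
    split_ifs <;> positivity

theorem oneDimGap_le_two_mul_cutMatchNum_div {S : Finset V} (hS : S.Nonempty)
    (hhalf : 2 * #S ≤ Fintype.card V) :
    oneDimGap G ≤ 2 * (cutMatchNum G S / #S) := by
  obtain ⟨C, hC, hcover⟩ := exists_coversCut_card_le_cutMatchNum G S
  have hSS : #S ≤ #Sᶜ := by rw [card_compl]; omega
  have hSc : Sᶜ.Nonempty := card_pos.1 (hS.card_pos.trans_le hSS)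
  have hS₀ : (0 : ℝ) < #S := by exact_mod_cast hS.card_pos
  calc oneDimGap G ≤ #C * ((#S : ℝ)⁻¹ + (#Sᶜ : ℝ)⁻¹) :=
        oneDimGap_le_card_mul_inv_add_inv G hS hSc hcover
    _ ≤ cutMatchNum G S * ((#S : ℝ)⁻¹ + (#S : ℝ)⁻¹) := by gcongr
    _ = 2 * (cutMatchNum G S / #S) := by ring

end Graph

/-- Easy direction of the matching-conductance Cheeger inequality: `λ*(G) ≤ 2·Υ*(G)`. -/
theorem oneDimGap_le_two_mul_matchCond {V : Type*} [Fintype V] (G : SimpleGraph V) :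
    oneDimGap G ≤ 2 * matchCond G := by
  rcases subsingleton_or_nontrivial V with hV | hV
  · rw [oneDimGap_of_subsingleton]
    refine mul_nonneg zero_le_two (Real.sInf_nonneg ?_)
    rintro r ⟨S, -, -, rfl⟩
    positivity
  · obtain ⟨u⟩ := hV.to_nonempty
    rw [← div_le_iff₀' two_pos]
    refine le_csInf ⟨_, {u}, singleton_nonempty u, ?_, rfl⟩ ?_
    · rw [card_singleton]
      exact Fintype.one_lt_card
    · rintro r ⟨S, hS, hhalf, rfl⟩
      rw [div_le_iff₀' two_pos]
      exact oneDimGap_le_two_mul_cutMatchNum_div G hS hhalf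
end
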